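/- arXiv:1812.07896 — 8 statements merged into one kernel-verified Lean document; each statement's English description precedes it below -/
import Mathlib

section
/- Let $X$ be an irreducible ergodic Markov chain on a finite state space $S$ with transition matrix $P$ and stationary distribution $\pi$, and fix $j \in S$. If the initial distribution is $\pi^{(j)} = (\pi - \pi_j \delta_j)/(1-\pi_j)$, and if for all $t \ge 0$ and all $y \in S$ we have $\pi_y \mathbb{P}(X_t = j) \le \pi_j \mathbb{P}(X_t = y)$, then the separation at time $t$ equals $s(t) = (P^t(j,j) - \pi_j)/(1 - \pi_j)$. -/
open MeasureTheory Finset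

/-- For an irreducible ergodic finite Markov chain with transition matrix `P`
and stationary distribution `π`, started from `π^{(j)}`, if
`π_y ℙ(X_t = j) ≤ π_j ℙ(X_t = y)` for all `t, y`, then the separation at time `t`
equals `(P^t(j,j) - π_j)/(1 - π_j)`. Here `ν t` is the distribution of `X_t`. -/
theorem separation_formula {S : Type*} [Fintype S] [DecidableEq S] [Nonempty S]
    (P : Matrix S S ℝ) (π : S → ℝ) (j : S)
    (hP0 : ∀ i k, 0 ≤ P i k) (hP1 : ∀ i, ∑ k, P i k = 1)
    (hirr : ∀ i k, ∃ t, 0 < (P ^ t) i k)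
    (herg : ∃ t, ∀ i k, 0 < (P ^ t) i k)
    (hπpos : ∀ s, 0 < π s) (hπsum : ∑ s, π s = 1)
    (hstat : Matrix.vecMul π P = π) (hπj : π j < 1)
    (ν : ℕ → S → ℝ)
    (hν : ∀ t, ν t = Matrix.vecMul
      (fun s => (π s - if s = j then π j else 0) / (1 - π j)) (P ^ t))
    (hineq : ∀ (t : ℕ) (y : S), π y * ν t j ≤ π j * ν t y) :
    ∀ t : ℕ, 1 - ⨅ s, ν t s / π s = ((P ^ t) j j - π j) / (1 - π j) := by
  have h1j : (0:ℝ) < 1 - π j := by linarith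
  have hstat_t : ∀ t : ℕ, Matrix.vecMul π (P ^ t) = π := by
    intro t
    induction t with
    | zero => simp [Matrix.vecMul_one]
    | succ n ih => rw [pow_succ, ← Matrix.vecMul_vecMul, ih, hstat]
  have hνs : ∀ t s, ν t s = (π s - π j * (P ^ t) j s) / (1 - π j) := by
    intro t s
    rw [hν]
    have : Matrix.vecMul (fun s => (π s - if s = j then π j else 0) / (1 - π j)) (P ^ t) s
        = ∑ k, (π k - if k = j then π j else 0) / (1 - π j) * (P ^ t) k s := by
      simp [Matrix.vecMul, dotProduct]
    rw [this]
    have hsum : ∑ k, π k * (P ^ t) k s = π s := by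
      have := congrFun (hstat_t t) s
      simpa [Matrix.vecMul, dotProduct] using this
    have : ∑ k, (π k - if k = j then π j else 0) / (1 - π j) * (P ^ t) k s
        = (∑ k, π k * (P ^ t) k s - ∑ k, (if k = j then π j * (P ^ t) k s else 0)) / (1 - π j) := by
      rw [← Finset.sum_sub_distrib, Finset.sum_div]
      refine Finset.sum_congr rfl fun k _ => ?_
      by_cases hk : k = j <;> simp [hk] <;> ring
    rw [this, Finset.sum_ite_eq' Finset.univ j, hsum]
    simp
  intro t
  have hinf : ⨅ s, ν t s / π s = ν t j / π j := by
    refine le_antisymm (ciInf_le (Set.Finite.bddBelow (Set.finite_range _)) j) (le_ciInf fun s => ?_)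
    rw [div_le_div_iff₀ (hπpos j) (hπpos s)]
    have := hineq t s
    nlinarith [hineq t s]
  rw [hinf, hνs t j]
  have hπjne : π j ≠ 0 := (hπpos j).ne'
  field_simp
  ring
end

section
/- Let $X$ be an irreducible ergodic Markov chain on finite state space $S$ with transition matrix $P$ and stationary distribution $\pi$, started from $X_0 \sim \pi^{(j)}$, where $j$ satisfies $\pi_y \mathbb{P}(X_t = j) \le \pi_j \mathbb{P}(X_t = y)$ for all $t \ge 0$ and $y \in S$. Then the diagonal transition probability $P^t(j,j)$ is non-increasing in $t$. -/
open Finset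

/-!
Write `ν t` for the law of `X_t` started from `π^{(j)}`. Since `π` is stationary,
`(1 - π_j) ν_t(j) = π_j - π_j P^t(j,j)`, so it suffices that `ν_t(j)` is non-decreasing.
One step of the chain gives `ν_{t+1}(j) = ∑_y ν_t(y) P(y,j)`, and the hypothesis
`ν_t(y) ≥ (π_y / π_j) ν_t(j)` bounds this below by `(ν_t(j) / π_j) ∑_y π_y P(y,j) = ν_t(j)`.
-/

namespace Matrix

variable {S K : Type*} [Fintype S]

theorem vecMul_pow_of_vecMul_eq [DecidableEq S] [Semiring K] {P : Matrix S S K} {π : S → K}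
    (hstat : vecMul π P = π) (t : ℕ) : vecMul π (P ^ t) = π := by
  induction t with
  | zero => simp
  | succ n ih => rw [pow_succ, ← vecMul_vecMul, ih, hstat]

theorem vecMul_restrict_apply [DecidableEq S] [Field K] {M : Matrix S S K} {π : S → K}
    (hM : vecMul π M = π) (j k : S) (c : K) :
    vecMul (fun s => (π s - if s = j then π j else 0) / c) M k = (π k - π j * M j k) / c := by
  have hrestrict : (fun s => (π s - if s = j then π j else 0) / c)
      = c⁻¹ • (π - Pi.single j (π j)) := by
    ext s
    simp only [Pi.smul_apply, Pi.sub_apply, Pi.single_apply, smul_eq_mul]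
    ring
  rw [hrestrict, smul_vecMul, sub_vecMul, hM, single_vecMul]
  simp only [Pi.smul_apply, Pi.sub_apply, row_apply, smul_eq_mul]
  ring

theorem le_vecMul_apply_of_mul_le_mul [Field K] [LinearOrder K] [IsStrictOrderedRing K]
    {P : Matrix S S K} {π ν : S → K} {j : S} (hP0 : ∀ y, 0 ≤ P y j)
    (hstat : vecMul π P j = π j) (hπj : 0 < π j) (hineq : ∀ y, π y * ν j ≤ π j * ν y) :
    ν j ≤ vecMul ν P j := by
  refine le_of_mul_le_mul_left ?_ hπj
  calc π j * ν j = ∑ y, π y * ν j * P y j := by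
        rw [← hstat]
        simp only [vecMul, dotProduct, sum_mul]
        exact sum_congr rfl fun y _ => by ring
    _ ≤ ∑ y, π j * ν y * P y j :=
        sum_le_sum fun y _ => mul_le_mul_of_nonneg_right (hineq y) (hP0 y)
    _ = π j * vecMul ν P j := by
        simp only [vecMul, dotProduct, mul_sum]
        exact sum_congr rfl fun y _ => by ring

end Matrix

theorem diag_antitone_general {S : Type*} [Fintype S] [DecidableEq S]
    (P : Matrix S S ℝ) (π : S → ℝ) (j : S)
    (hP0 : ∀ i k, 0 ≤ P i k)
    (hπpos : ∀ s, 0 < π s)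
    (hstat : Matrix.vecMul π P = π) (hπj : π j < 1)
    (ν : ℕ → S → ℝ)
    (hν : ∀ t, ν t = Matrix.vecMul
      (fun s => (π s - if s = j then π j else 0) / (1 - π j)) (P ^ t))
    (hineq : ∀ (t : ℕ) (y : S), π y * ν t j ≤ π j * ν t y) :
    ∀ t : ℕ, (P ^ (t + 1)) j j ≤ (P ^ t) j j := by
  intro t
  have hform : ∀ t, ν t j = (π j - π j * (P ^ t) j j) / (1 - π j) := fun t => by
    rw [hν t]
    exact Matrix.vecMul_restrict_apply (Matrix.vecMul_pow_of_vecMul_eq hstat t) j j _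
  have hstep : ν (t + 1) = Matrix.vecMul (ν t) P := by
    rw [hν, hν, pow_succ, Matrix.vecMul_vecMul]
  have hmono : ν t j ≤ ν (t + 1) j := by
    rw [hstep]
    exact Matrix.le_vecMul_apply_of_mul_le_mul (fun y => hP0 y j) (congrFun hstat j)
      (hπpos j) (hineq t)
  rw [hform, hform, div_le_div_iff_of_pos_right (by linarith)] at hmono
  exact le_of_mul_le_mul_left (by linarith) (hπpos j)

/-- Under the hypotheses of Lemma 1.2 (chain started from `π^{(j)}`, with
`π_y ℙ(X_t = j) ≤ π_j ℙ(X_t = y)` for all `t, y`), the diagonal transition probability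
`P^t(j,j)` is non-increasing in `t`. -/
theorem diag_antitone {S : Type*} [Fintype S] [DecidableEq S] [Nonempty S]
    (P : Matrix S S ℝ) (π : S → ℝ) (j : S)
    (hP0 : ∀ i k, 0 ≤ P i k) (hP1 : ∀ i, ∑ k, P i k = 1)
    (hirr : ∀ i k, ∃ t, 0 < (P ^ t) i k)
    (herg : ∃ t, ∀ i k, 0 < (P ^ t) i k)
    (hπpos : ∀ s, 0 < π s) (hπsum : ∑ s, π s = 1)
    (hstat : Matrix.vecMul π P = π) (hπj : π j < 1)
    (ν : ℕ → S → ℝ)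
    (hν : ∀ t, ν t = Matrix.vecMul
      (fun s => (π s - if s = j then π j else 0) / (1 - π j)) (P ^ t))
    (hineq : ∀ (t : ℕ) (y : S), π y * ν t j ≤ π j * ν t y) :
    ∀ t : ℕ, (P ^ (t + 1)) j j ≤ (P ^ t) j j :=
  diag_antitone_general P π j hP0 hπpos hstat hπj ν hν hineq
end

section
/- Under the hypotheses that $X_0 \sim \pi^{(j)}$ and $\pi_y \mathbb{P}(X_t = j) \le \pi_j \mathbb{P}(X_t = y)$ for all $t \ge 0, y \in S$, let $T^{(j)}$ be a strong stationary time with $\mathbb{P}(T^{(j)} > t) = (P^t(j,j) - \pi_j)/(1-\pi_j)$. Then $\mathbb{P}(T^{(j)} > t, X_t = j) = 0$ for all $t \ge 0$. -/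
/-!
Subtracting `ℙ(T ≤ t, X_t = j) = ℙ(T ≤ t) π_j`, the strong stationary property summed over
`T = s ≤ t`, from `ℙ(X_t = j) = π_j (1 - P^t(j,j)) / (1 - π_j) = π_j ℙ(T ≤ t)`, obtained by pushing
the initial law through `P^t` and using `π P = π`, leaves `ℙ(T > t, X_t = j) = 0`.

Neither `X` nor `T` is assumed measurable, so both additivity steps need care. A set `B` with
`μ B + μ Bᶜ ≤ 1` is null measurable; hence so is every piece of a finite cover of a null
measurable set whose masses add up to at most the mass of the set. The Markov identities make the
path events such a cover, by induction on the length of the path, and the strong stationary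
identities together with the tail formula make `{T = t}` and `{T > t}` such a cover of `{T ≥ t}`,
by strong induction on `t`.
-/

open MeasureTheory Finset

/-- A (homogeneous) Markov chain with one-step transition matrix `P`, stated by
conditioning on the full history. -/
def IsMarkovChain {Ω E : Type*} [MeasurableSpace Ω] (μ : Measure Ω)
    (X : ℕ → Ω → E) (P : E → E → ℝ) : Prop :=
  ∀ (t : ℕ) (h : ℕ → E) (y : E),
    (μ {ω | X (t + 1) ω = y ∧ ∀ i ≤ t, X i ω = h i}).toReal
      = P (h t) y * (μ {ω | ∀ i ≤ t, X i ω = h i}).toReal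

/-- A strong stationary time `T` for the chain `X` with stationary distribution `π`:
at and after time `T` the chain is stationary and independent of `T`. -/
def IsStrongStationaryTime {Ω E : Type*} [MeasurableSpace Ω] (μ : Measure Ω)
    (X : ℕ → Ω → E) (T : Ω → ℕ) (π : E → ℝ) : Prop :=
  ∀ (s t : ℕ), s ≤ t → ∀ y : E,
    (μ {ω | T ω = s ∧ X t ω = y}).toReal = (μ {ω | T ω = s}).toReal * π y

open Function

namespace MeasureTheory

variable {Ω : Type*} [MeasurableSpace Ω] {μ : Measure Ω} [IsFiniteMeasure μ] {s A B C : Set Ω}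

theorem nullMeasurableSet_of_measureReal_add_compl_le
    (h : μ.real s + μ.real sᶜ ≤ μ.real Set.univ) : NullMeasurableSet s μ := by
  set t := toMeasurable μ sᶜ
  have hts : tᶜ ⊆ s := Set.compl_subset_comm.mp (subset_toMeasurable μ sᶜ)
  have hle : μ.real s ≤ μ.real tᶜ := by
    rw [measureReal_compl (measurableSet_toMeasurable μ sᶜ), measureReal_def μ t,
      measure_toMeasurable, ← measureReal_def]
    linarith
  exact (measurableSet_toMeasurable μ sᶜ).compl.nullMeasurableSet.congr
    (ae_eq_of_subset_of_measure_ge hts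
      ((ENNReal.toReal_le_toReal (measure_ne_top μ _) (measure_ne_top μ _)).mp hle)
      (measurableSet_toMeasurable μ sᶜ).compl.nullMeasurableSet (measure_ne_top μ _))

theorem NullMeasurableSet.of_subset_union_of_measureReal_add_le (hA : NullMeasurableSet A μ)
    (hcover : A ⊆ B ∪ C) (hle : μ.real B + μ.real C ≤ μ.real A) : NullMeasurableSet B μ := by
  refine nullMeasurableSet_of_measureReal_add_compl_le ?_
  have hBc : Bᶜ ⊆ C ∪ Aᶜ := fun ω hω => by
    by_cases hωA : ω ∈ A
    · exact Or.inl ((hcover hωA).resolve_left hω)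
    · exact Or.inr hωA
  calc μ.real B + μ.real Bᶜ ≤ μ.real B + (μ.real C + μ.real Aᶜ) := by
        gcongr; exact (measureReal_mono hBc).trans (measureReal_union_le _ _)
    _ ≤ μ.real A + μ.real Aᶜ := by linarith
    _ = μ.real Set.univ := measureReal_add_measureReal_compl₀ hA

theorem NullMeasurableSet.of_subset_iUnion_of_sum_measureReal_le {ι : Type*} [Fintype ι]
    {B : ι → Set Ω} (hA : NullMeasurableSet A μ) (hcover : A ⊆ ⋃ i, B i)
    (hle : ∑ i, μ.real (B i) ≤ μ.real A) (i : ι) : NullMeasurableSet (B i) μ := by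
  classical
  refine hA.of_subset_union_of_measureReal_add_le (C := ⋃ k ∈ univ.erase i, B k) ?_ ?_
  · intro ω hω
    obtain ⟨k, hk⟩ := Set.mem_iUnion.mp (hcover hω)
    by_cases hki : k = i
    · exact Or.inl (hki ▸ hk)
    · exact Or.inr (Set.mem_biUnion (mem_erase.mpr ⟨hki, mem_univ k⟩) hk)
  · calc μ.real (B i) + μ.real (⋃ k ∈ univ.erase i, B k)
        ≤ μ.real (B i) + ∑ k ∈ univ.erase i, μ.real (B k) := by
          gcongr; exact measureReal_biUnion_finset_le _ _
      _ = ∑ k, μ.real (B k) := add_sum_erase _ (fun k => μ.real (B k)) (mem_univ i)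
      _ ≤ μ.real A := hle

theorem measureReal_iUnion_fintype₀ {ι : Type*} [Fintype ι] {f : ι → Set Ω}
    (hd : Pairwise (AEDisjoint μ on f)) (hm : ∀ i, NullMeasurableSet (f i) μ) :
    μ.real (⋃ i, f i) = ∑ i, μ.real (f i) := by
  simp_rw [measureReal_def, measure_iUnion₀ hd hm, tsum_fintype,
    ENNReal.toReal_sum (fun i _ => measure_ne_top μ (f i))]

end MeasureTheory

section pathEvent

variable {Ω S : Type*} (X : ℕ → Ω → S)

def pathEvent (k t : ℕ) (h : ℕ → S) : Set Ω :=
  {ω | ∀ i, k ≤ i → i ≤ t → X i ω = h i}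

theorem pathEvent_self (t : ℕ) (h : ℕ → S) : pathEvent X t t h = {ω | X t ω = h t} := by
  ext ω
  refine ⟨fun hω => hω t le_rfl le_rfl, fun hω i hki hit => ?_⟩
  obtain rfl : i = t := le_antisymm hit hki
  exact hω

theorem pathEvent_succ_right {k t : ℕ} (hk : k ≤ t + 1) (h : ℕ → S) :
    pathEvent X k (t + 1) h = {ω | X (t + 1) ω = h (t + 1)} ∩ pathEvent X k t h := by
  ext ω
  refine ⟨fun hω => ⟨hω _ hk le_rfl, fun i hki hit => hω i hki (by omega)⟩,
    fun ⟨hlast, hω⟩ i hki hit => ?_⟩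
  rcases Nat.lt_or_eq_of_le hit with hit | rfl
  · exact hω i hki (by omega)
  · exact hlast

theorem pathEvent_succ_left (k t : ℕ) (h : ℕ → S) :
    pathEvent X (k + 1) t h = ⋃ x, pathEvent X k t (update h k x) := by
  ext ω
  simp only [pathEvent, Set.mem_iUnion, Set.mem_ofPred_eq]
  constructor
  · intro hω
    refine ⟨X k ω, fun i hki hit => ?_⟩
    rcases Nat.lt_or_eq_of_le hki with hki | rfl
    · rw [update_of_ne (by omega)]; exact hω i hki hit
    · simp
  · rintro ⟨x, hω⟩ i hki hit
    rw [← update_of_ne (by omega : i ≠ k) x h]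
    exact hω i (by omega) hit

theorem pairwise_disjoint_pathEvent_update {k t : ℕ} (hkt : k ≤ t) (h : ℕ → S) :
    Pairwise (Disjoint on (fun x => pathEvent X k t (update h k x))) := by
  intro x x' hxx'
  refine Set.disjoint_left.mpr fun ω hω hω' => hxx' ?_
  have h1 := hω k le_rfl hkt
  have h2 := hω' k le_rfl hkt
  simp only [update_self] at h1 h2
  exact h1.symm.trans h2

end pathEvent

namespace IsMarkovChain

variable {Ω S : Type*} [MeasurableSpace Ω] {μ : Measure Ω} {X : ℕ → Ω → S} {P : Matrix S S ℝ}

theorem measureReal_inter_pathEvent_zero (hX : IsMarkovChain μ X P) (t : ℕ) (h : ℕ → S)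
    (y : S) :
    μ.real ({ω | X (t + 1) ω = y} ∩ pathEvent X 0 t h)
      = P (h t) y * μ.real (pathEvent X 0 t h) := by
  have hpath : pathEvent X 0 t h = {ω | ∀ i ≤ t, X i ω = h i} := by
    ext ω; simp [pathEvent]
  rw [hpath]
  exact hX t h y

variable [IsProbabilityMeasure μ] [Fintype S]

theorem nullMeasurableSet_pathEvent_zero (hX : IsMarkovChain μ X P) (hP : ∀ x, ∑ y, P x y = 1)
    (h0 : ∑ y, μ.real {ω | X 0 ω = y} = 1) (t : ℕ) (h : ℕ → S) :
    NullMeasurableSet (pathEvent X 0 t h) μ := by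
  induction t generalizing h with
  | zero =>
    rw [pathEvent_self]
    exact nullMeasurableSet_univ.of_subset_iUnion_of_sum_measureReal_le
      (B := fun y => {ω | X 0 ω = y}) (fun ω _ => Set.mem_iUnion.mpr ⟨X 0 ω, rfl⟩)
      (by simp [h0]) (h 0)
  | succ t ih =>
    rw [pathEvent_succ_right X (Nat.zero_le _)]
    refine (ih h).of_subset_iUnion_of_sum_measureReal_le
      (B := fun y => {ω | X (t + 1) ω = y} ∩ pathEvent X 0 t h)
      (fun ω hω => Set.mem_iUnion.mpr ⟨X (t + 1) ω, rfl, hω⟩) ?_ (h (t + 1))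
    simp only [hX.measureReal_inter_pathEvent_zero, ← sum_mul, hP, one_mul, le_rfl]

theorem nullMeasurableSet_pathEvent (hX : IsMarkovChain μ X P) (hP : ∀ x, ∑ y, P x y = 1)
    (h0 : ∑ y, μ.real {ω | X 0 ω = y} = 1) (k t : ℕ) (h : ℕ → S) :
    NullMeasurableSet (pathEvent X k t h) μ := by
  induction k generalizing h with
  | zero => exact nullMeasurableSet_pathEvent_zero hX hP h0 t h
  | succ k ih =>
    rw [pathEvent_succ_left]
    exact NullMeasurableSet.iUnion fun x => ih _

theorem nullMeasurableSet_eq (hX : IsMarkovChain μ X P) (hP : ∀ x, ∑ y, P x y = 1)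
    (h0 : ∑ y, μ.real {ω | X 0 ω = y} = 1) (t : ℕ) (y : S) :
    NullMeasurableSet {ω | X t ω = y} μ := by
  simpa only [pathEvent_self] using nullMeasurableSet_pathEvent hX hP h0 t t (fun _ => y)

/-- The Markov property given only the recent history: the older coordinates are summed out
one at a time. -/
theorem measureReal_inter_pathEvent (hX : IsMarkovChain μ X P) (hP : ∀ x, ∑ y, P x y = 1)
    (h0 : ∑ y, μ.real {ω | X 0 ω = y} = 1) {k t : ℕ} (hkt : k ≤ t) (h : ℕ → S) (y : S) :
    μ.real ({ω | X (t + 1) ω = y} ∩ pathEvent X k t h)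
      = P (h t) y * μ.real (pathEvent X k t h) := by
  induction k generalizing h with
  | zero => exact hX.measureReal_inter_pathEvent_zero t h y
  | succ k ih =>
    have hdisj := pairwise_disjoint_pathEvent_update X (Nat.le_of_succ_le hkt) h
    have hmeas := fun x => nullMeasurableSet_pathEvent hX hP h0 k t (update h k x)
    rw [pathEvent_succ_left, Set.inter_iUnion,
      measureReal_iUnion_fintype₀ (fun x x' hxx' =>
        ((hdisj hxx').mono Set.inter_subset_right Set.inter_subset_right).aedisjoint)
        (fun x => (nullMeasurableSet_eq hX hP h0 _ y).inter (hmeas x)),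
      measureReal_iUnion_fintype₀ (fun x x' hxx' => (hdisj hxx').aedisjoint) hmeas, mul_sum]
    refine sum_congr rfl fun x _ => ?_
    rw [ih (Nat.le_of_succ_le hkt), update_of_ne (by omega)]

theorem measureReal_succ_eq_inter_eq (hX : IsMarkovChain μ X P) (hP : ∀ x, ∑ y, P x y = 1)
    (h0 : ∑ y, μ.real {ω | X 0 ω = y} = 1) (t : ℕ) (x y : S) :
    μ.real ({ω | X (t + 1) ω = y} ∩ {ω | X t ω = x}) = P x y * μ.real {ω | X t ω = x} := by
  simpa only [pathEvent_self] using
    measureReal_inter_pathEvent hX hP h0 le_rfl (fun _ => x) y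

theorem marginal_succ_eq_vecMul (hX : IsMarkovChain μ X P) (hP : ∀ x, ∑ y, P x y = 1)
    (h0 : ∑ y, μ.real {ω | X 0 ω = y} = 1) (t : ℕ) :
    (fun y => μ.real {ω | X (t + 1) ω = y})
      = Matrix.vecMul (fun x => μ.real {ω | X t ω = x}) P := by
  ext y
  have hfib : {ω | X (t + 1) ω = y} = ⋃ x, {ω | X (t + 1) ω = y} ∩ {ω | X t ω = x} := by
    ext ω; simp
  rw [hfib, measureReal_iUnion_fintype₀, Matrix.vecMul, dotProduct]
  · simp only [measureReal_succ_eq_inter_eq hX hP h0, mul_comm]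
  · exact fun x x' hxx' => (Disjoint.mono Set.inter_subset_right Set.inter_subset_right
      (Set.disjoint_left.mpr fun ω h h' => hxx' (h.symm.trans h'))).aedisjoint
  · exact fun x => (nullMeasurableSet_eq hX hP h0 _ y).inter (nullMeasurableSet_eq hX hP h0 t x)

theorem marginal_eq_vecMul_pow [DecidableEq S] (hX : IsMarkovChain μ X P)
    (hP : ∀ x, ∑ y, P x y = 1) (h0 : ∑ y, μ.real {ω | X 0 ω = y} = 1) (t : ℕ) :
    (fun y => μ.real {ω | X t ω = y})
      = Matrix.vecMul (fun y => μ.real {ω | X 0 ω = y}) (P ^ t) := by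
  induction t with
  | zero => simp
  | succ t ih => rw [marginal_succ_eq_vecMul hX hP h0, ih, Matrix.vecMul_vecMul, pow_succ]

end IsMarkovChain

theorem Matrix.vecMul_pow_of_vecMul_eq_self {S : Type*} [Fintype S] [DecidableEq S]
    {π : S → ℝ} {P : Matrix S S ℝ} (hπ : Matrix.vecMul π P = π) (t : ℕ) :
    Matrix.vecMul π (P ^ t) = π := by
  induction t with
  | zero => simp
  | succ t ih => rw [pow_succ, ← Matrix.vecMul_vecMul, ih, hπ]

theorem vecMul_pow_apply_self_of_stationary {S : Type*} [Fintype S] [DecidableEq S]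
    {π : S → ℝ} {P : Matrix S S ℝ} (hπ : Matrix.vecMul π P = π) (j : S) (t : ℕ) :
    Matrix.vecMul (fun s => (π s - if s = j then π j else 0) / (1 - π j)) (P ^ t) j
      = π j * (1 - (P ^ t) j j) / (1 - π j) := by
  have hvec : (fun s => (π s - if s = j then π j else 0) / (1 - π j))
      = (1 - π j)⁻¹ • (π - Pi.single j (π j)) := by
    ext s; by_cases hs : s = j <;> simp [hs, div_eq_inv_mul]
  rw [hvec, Matrix.smul_vecMul, Matrix.sub_vecMul, Matrix.vecMul_pow_of_vecMul_eq_self hπ,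
    Matrix.single_vecMul]
  simp only [Pi.smul_apply, Pi.sub_apply, Matrix.row_apply, smul_eq_mul]
  ring

theorem setOf_lt_eq_biUnion_range {Ω : Type*} (T : Ω → ℕ) (t : ℕ) :
    {ω | T ω < t} = ⋃ s ∈ range t, {ω | T ω = s} := by
  ext; simp

theorem setOf_le_eq_compl {Ω : Type*} (T : Ω → ℕ) (t : ℕ) :
    {ω | t ≤ T ω} = {ω | T ω < t}ᶜ := by
  ext; simp

theorem nullMeasurableSet_setOf_lt {Ω : Type*} [MeasurableSpace Ω] {μ : Measure Ω} {T : Ω → ℕ}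
    {t : ℕ} (hT : ∀ s < t, NullMeasurableSet {ω | T ω = s} μ) :
    NullMeasurableSet {ω | T ω < t} μ := by
  rw [setOf_lt_eq_biUnion_range]
  exact Finset.nullMeasurableSet_biUnion _ fun s hs => hT s (mem_range.mp hs)

namespace IsStrongStationaryTime

variable {Ω S : Type*} [MeasurableSpace Ω] {μ : Measure Ω} [IsProbabilityMeasure μ]
  {X : ℕ → Ω → S} {T : Ω → ℕ} {π : S → ℝ}

theorem measureReal_lt_and (hsst : IsStrongStationaryTime μ X T π) {t u : ℕ} (htu : t ≤ u + 1)
    {y : S} (hT : ∀ s < t, NullMeasurableSet {ω | T ω = s} μ)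
    (hX : NullMeasurableSet {ω | X u ω = y} μ) :
    μ.real {ω | T ω < t ∧ X u ω = y} = μ.real {ω | T ω < t} * π y := by
  have hunion :
      {ω | T ω < t ∧ X u ω = y} = ⋃ s ∈ range t, {ω | T ω = s} ∩ {ω | X u ω = y} := by
    ext; simp
  have hdisj : Set.Pairwise ↑(range t) (Disjoint on fun s => {ω | T ω = s}) :=
    fun s _ s' _ hss' => Set.disjoint_left.mpr fun ω h h' => hss' (h.symm.trans h')
  rw [hunion, setOf_lt_eq_biUnion_range,
    measureReal_biUnion_finset₀ (hdisj.mono' fun s s' h =>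
      (h.mono Set.inter_subset_left Set.inter_subset_left).aedisjoint)
      fun s hs => (hT s (mem_range.mp hs)).inter hX,
    measureReal_biUnion_finset₀ (hdisj.mono' fun s s' h => h.aedisjoint)
      fun s hs => hT s (mem_range.mp hs), sum_mul]
  exact sum_congr rfl fun s hs => hsst s u (by simp at hs; omega) y

theorem measureReal_le_and (hsst : IsStrongStationaryTime μ X T π) {t u : ℕ} (htu : t ≤ u + 1)
    {y : S} (hT : ∀ s < t, NullMeasurableSet {ω | T ω = s} μ)
    (hX : NullMeasurableSet {ω | X u ω = y} μ) :
    μ.real {ω | t ≤ T ω ∧ X u ω = y}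
      = μ.real {ω | X u ω = y} - (1 - μ.real {ω | t ≤ T ω}) * π y := by
  have hlt := nullMeasurableSet_setOf_lt hT
  have hsplit := measureReal_inter_add_sdiff₀ (s := {ω | X u ω = y}) hlt
  have hcompl := measureReal_add_measureReal_compl₀ hlt
  have hinter : {ω | X u ω = y} ∩ {ω | T ω < t} = {ω | T ω < t ∧ X u ω = y} := by
    ext; simp [and_comm]
  have hdiff : {ω | X u ω = y} \ {ω | T ω < t} = {ω | t ≤ T ω ∧ X u ω = y} := by
    ext; simp [and_comm]
  rw [hinter, hdiff, measureReal_lt_and hsst htu hT hX] at hsplit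
  rw [← setOf_le_eq_compl, probReal_univ] at hcompl
  rw [← hsplit, ← hcompl]
  ring

variable {j : S}

theorem nullMeasurableSet_eq (hsst : IsStrongStationaryTime μ X T π) (hπ : 0 < π j)
    (hX : ∀ t, NullMeasurableSet {ω | X t ω = j} μ)
    (hmarg : ∀ t, μ.real {ω | X t ω = j} = π j * (1 - μ.real {ω | t < T ω})) (t : ℕ) :
    NullMeasurableSet {ω | T ω = t} μ := by
  induction t using Nat.strong_induction_on with
  | _ t ih =>
  have hle : NullMeasurableSet {ω | t ≤ T ω} μ :=
    setOf_le_eq_compl T t ▸ (nullMeasurableSet_setOf_lt ih).compl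
  have key :
      π j * μ.real {ω | T ω = t} ≤ π j * (μ.real {ω | t ≤ T ω} - μ.real {ω | t < T ω}) :=
    calc π j * μ.real {ω | T ω = t} = μ.real {ω | T ω = t ∧ X t ω = j} := by
          rw [mul_comm]; exact (hsst t t le_rfl j).symm
      _ ≤ μ.real {ω | t ≤ T ω ∧ X t ω = j} := measureReal_mono fun ω h => ⟨h.1.ge, h.2⟩
      _ = _ := by rw [measureReal_le_and hsst (by omega) ih (hX t), hmarg]; ring
  refine hle.of_subset_union_of_measureReal_add_le (C := {ω | t < T ω})
    (fun ω h => (eq_or_lt_of_le h).imp Eq.symm id) ?_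
  linarith [le_of_mul_le_mul_left key hπ]

theorem measure_lt_and_eq_zero (hsst : IsStrongStationaryTime μ X T π) (hπ : 0 < π j)
    (hX : ∀ t, NullMeasurableSet {ω | X t ω = j} μ)
    (hmarg : ∀ t, μ.real {ω | X t ω = j} = π j * (1 - μ.real {ω | t < T ω})) (t : ℕ) :
    μ {ω | t < T ω ∧ X t ω = j} = 0 := by
  rw [← measureReal_eq_zero_iff]
  have := measureReal_le_and hsst (t := t + 1) le_rfl
    (fun s _ => nullMeasurableSet_eq hsst hπ hX hmarg s) (hX t)
  simp only [Nat.succ_le_iff] at this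
  rw [this, hmarg]
  ring

end IsStrongStationaryTime

theorem sst_before_hit_general {S : Type*} [Fintype S] [DecidableEq S]
    {Ω : Type*} [MeasurableSpace Ω] (μ : Measure Ω) [IsProbabilityMeasure μ]
    (X : ℕ → Ω → S) (T : Ω → ℕ)
    (P : Matrix S S ℝ) (π : S → ℝ) (j : S)
    (hP1 : ∀ i, ∑ k, P i k = 1)
    (hπpos : ∀ s, 0 < π s) (hπsum : ∑ s, π s = 1)
    (hstat : Matrix.vecMul π P = π) (hπj : π j < 1)
    (hchain : IsMarkovChain μ (fun t => X t) (fun a b => P a b))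
    (hinit : ∀ s, (μ {ω | X 0 ω = s}).toReal
      = (π s - if s = j then π j else 0) / (1 - π j))
    (hsst : IsStrongStationaryTime μ X T π)
    (hTail : ∀ t : ℕ, (μ {ω | t < T ω}).toReal = ((P ^ t) j j - π j) / (1 - π j)) :
    ∀ t : ℕ, μ {ω | t < T ω ∧ X t ω = j} = 0 := by
  have hπj' : 1 - π j ≠ 0 := by linarith
  have hX : IsMarkovChain μ X P := hchain
  have hinit' : (fun s => μ.real {ω | X 0 ω = s})
      = fun s => (π s - if s = j then π j else 0) / (1 - π j) := funext hinit
  have h0 : ∑ s, μ.real {ω | X 0 ω = s} = 1 := by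
    rw [hinit', ← sum_div, sum_sub_distrib, hπsum, sum_ite_eq', if_pos (mem_univ j),
      div_self hπj']
  have hmarg (t : ℕ) : μ.real {ω | X t ω = j} = π j * (1 - μ.real {ω | t < T ω}) := by
    rw [show μ.real {ω | X t ω = j} = _ from congrFun (hX.marginal_eq_vecMul_pow hP1 h0 t) j,
      hinit', vecMul_pow_apply_self_of_stationary hstat, measureReal_def, hTail]
    field_simp
    ring
  exact hsst.measure_lt_and_eq_zero (hπpos j) (fun t => hX.nullMeasurableSet_eq hP1 h0 t j) hmarg

/-- if `X₀ ~ π^{(j)}`, `π_y ℙ(X_t = j) ≤ π_j ℙ(X_t = y)` for all `t, y`, and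
`T` is a strong stationary time with `ℙ(T > t) = (P^t(j,j) - π_j)/(1 - π_j)`, then
`ℙ(T > t, X_t = j) = 0` for all `t`. -/
theorem sst_before_hit {S : Type*} [Fintype S] [DecidableEq S] [Nonempty S]
    {Ω : Type*} [MeasurableSpace Ω] (μ : Measure Ω) [IsProbabilityMeasure μ]
    (X : ℕ → Ω → S) (T : Ω → ℕ)
    (P : Matrix S S ℝ) (π : S → ℝ) (j : S)
    (hP0 : ∀ i k, 0 ≤ P i k) (hP1 : ∀ i, ∑ k, P i k = 1)
    (hirr : ∀ i k, ∃ t, 0 < (P ^ t) i k)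
    (herg : ∃ t, ∀ i k, 0 < (P ^ t) i k)
    (hπpos : ∀ s, 0 < π s) (hπsum : ∑ s, π s = 1)
    (hstat : Matrix.vecMul π P = π) (hπj : π j < 1)
    (hchain : IsMarkovChain μ (fun t => X t) (fun a b => P a b))
    (hinit : ∀ s, (μ {ω | X 0 ω = s}).toReal
      = (π s - if s = j then π j else 0) / (1 - π j))
    (hineq : ∀ (t : ℕ) (y : S),
      π y * (μ {ω | X t ω = j}).toReal ≤ π j * (μ {ω | X t ω = y}).toReal)
    (hsst : IsStrongStationaryTime μ X T π)
    (hTail : ∀ t : ℕ, (μ {ω | t < T ω}).toReal = ((P ^ t) j j - π j) / (1 - π j)) :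
    ∀ t : ℕ, μ {ω | t < T ω ∧ X t ω = j} = 0 :=
  sst_before_hit_general μ X T P π j hP1 hπpos hπsum hstat hπj hchain hinit hsst hTail
end

section
/- Let $X$ be an irreducible ergodic Markov chain on finite $S$ with stationary distribution $\pi$, started with $X_0 \sim \pi$, and let $W_j = \inf\{t \ge 0 : X_t = j\}$. Suppose $j$ satisfies $\pi_y \mathbb{P}(X_t = j) \le \pi_j \mathbb{P}(X_t = y)$ for all $t \ge 0$ and $y \in S$ when $X_0 \sim \pi^{(j)}$, and let $T^{(j)}$ satisfy $\mathbb{P}(T^{(j)} > t) = (P^t(j,j)-\pi_j)/(1-\pi_j)$. Then $W_j$ is equal in distribution to $T^{(j)}_1 + \cdots + T^{(j)}_N$, where $N \sim \mathrm{Geom}(\pi_j)$ (supported on $\{0,1,2,\ldots\}$) and $T^{(j)}_1, T^{(j)}_2, \ldots$ are IID copies of $T^{(j)}$ independent of $N$. -/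
open MeasureTheory Finset

/-- `k`-fold convolution power of a distribution `f` on `ℕ`:
the law of the sum of `k` IID copies. -/
noncomputable def convPow (f : ℕ → ℝ) : ℕ → ℕ → ℝ
  | 0, n => if n = 0 then 1 else 0
  | (k + 1), n => ∑ i ∈ Finset.range (n + 1), f i * convPow f k (n - i)

/-- The law of a geometric (parameter `p`, supported on `{0,1,2,...}`) sum of IID
random variables with law `f` on `ℕ`. -/
noncomputable def geomSumPMF (p : ℝ) (f : ℕ → ℝ) (n : ℕ) : ℝ :=
  ∑' k : ℕ, p * (1 - p) ^ k * convPow f k n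

/-- The probability mass function on `ℕ` of a random variable with tail function `q`,
`q t = ℙ(T > t)`. -/
noncomputable def tailToPMF (q : ℕ → ℝ) : ℕ → ℝ
  | 0 => 1 - q 0
  | (n + 1) => q n - q (n + 1)

open Matrix

/-!
Stationarity gives `ℙ(Xₙ = j) = π j` for every `n`. Splitting this event according to the time
`m ≤ n` of the first visit to `j` and applying the Markov property at that time yields the
renewal equation `∑_{m ≤ n} ℙ(W = m) Pⁿ⁻ᵐ(j, j) = π j`. The law `G` of a `Geom(p)` sum of IID
copies of a law `f` with `f 0 = 0` satisfies `G = p δ₀ + (1 - p) f ∗ G`; for `p = π j` and `f`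
the law of `T^{(j)}` one has `(1 - p) f(n + 1) = Pⁿ(j, j) - Pⁿ⁺¹(j, j)`, and these two facts give
the same renewal equation for `G`. As `P⁰(j, j) = 1`, the renewal equation determines its solution.

Ergodicity makes `j` hit almost surely: a chance at least `ε > 0` of sitting at `j` after `r`
steps, from every state, makes the probability of avoiding `j` up to time `k r` at most
`(1 - ε)ᵏ`. So the junk value `sInf ∅ = 0` of `W` carries no mass.
-/

theorem Nat.sInf_setOf_eq_iff {p : ℕ → Prop} (h : ∃ n, p n) {m : ℕ} :
    sInf {n | p n} = m ↔ p m ∧ ∀ k < m, ¬p k := by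
  classical
  rw [Nat.sInf_def (s := {n | p n}) h, Nat.find_eq_iff]
  rfl

theorem existsUnique_first {ι : Type*} [LinearOrder ι] [WellFoundedLT ι] {p : ι → Prop}
    (h : ∃ i, p i) : ∃! i, p i ∧ ∀ k < i, ¬p k := by
  obtain ⟨i, hi, hmin⟩ := wellFounded_lt.has_min {i | p i} h
  have hfirst : ∀ k < i, ¬p k := fun k hk hpk => hmin k hpk hk
  refine ⟨i, ⟨hi, hfirst⟩, fun k ⟨hk, hkfirst⟩ => ?_⟩
  rcases lt_trichotomy k i with hki | rfl | hik
  · exact absurd hk (hfirst k hki)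
  · rfl
  · exact absurd hi (hkfirst i hik)

theorem Fintype.sum_pi_fin_succ {S M : Type*} [Fintype S] [AddCommMonoid M] {n : ℕ}
    (F : (Fin (n + 1) → S) → M) : ∑ g, F g = ∑ h : Fin n → S, ∑ y, F (Fin.snoc h y) := by
  rw [← (Fin.snocEquiv fun _ => S).sum_comp, Fintype.sum_prod_type, sum_comm]
  rfl

theorem Matrix.pow_mulVec_one {n R : Type*} [Fintype n] [DecidableEq n] [Semiring R]
    {P : Matrix n n R} (hP : P *ᵥ 1 = 1) (r : ℕ) : P ^ r *ᵥ 1 = 1 := by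
  induction r with
  | zero => simp
  | succ r ih => rw [pow_succ, ← mulVec_mulVec, hP, ih]

theorem Matrix.vecMul_pow_eq_self {n R : Type*} [Fintype n] [DecidableEq n] [Semiring R]
    {P : Matrix n n R} {π : n → R} (hπ : π ᵥ* P = π) (r : ℕ) : π ᵥ* P ^ r = π := by
  induction r with
  | zero => simp
  | succ r ih => rw [pow_succ, ← vecMul_vecMul, ih, hπ]

/-- No measurability of `f` is assumed: additivity over the fibres of `f` follows from
subadditivity of the outer measure once the fibres carry total mass `1`. -/
theorem measureReal_preimage_eq_sum {Ω α : Type*} [MeasurableSpace Ω] [Fintype α]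
    {μ : Measure Ω} [IsProbabilityMeasure μ] {f : Ω → α}
    (hf : ∑ a, μ.real (f ⁻¹' {a}) = 1) (A : Finset α) :
    μ.real (f ⁻¹' A) = ∑ a ∈ A, μ.real (f ⁻¹' {a}) := by
  classical
  have hle : ∀ B : Finset α, μ.real (f ⁻¹' B) ≤ ∑ a ∈ B, μ.real (f ⁻¹' {a}) := fun B => by
    simpa [← Set.preimage_iUnion₂] using measureReal_biUnion_finset_le B fun a => f ⁻¹' {a}
  have hcover : 1 ≤ μ.real (f ⁻¹' A) + μ.real (f ⁻¹' ↑Aᶜ) :=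
    calc 1 = μ.real (f ⁻¹' A ∪ f ⁻¹' ↑Aᶜ) := by
          rw [← Set.preimage_union, coe_compl, Set.union_compl_self, Set.preimage_univ,
            probReal_univ]
      _ ≤ _ := measureReal_union_le _ _
  linarith [hle A, hle Aᶜ, sum_add_sum_compl A fun a => μ.real (f ⁻¹' {a})]

theorem sum_range_mul_reflect {R : Type*} [Mul R] [AddCommMonoid R] (a b : ℕ → R) (n : ℕ) :
    ∑ i ∈ range (n + 1), a i * b (n - i) = ∑ i ∈ range (n + 1), a (n - i) * b i := by
  rw [← sum_range_reflect]
  refine sum_congr rfl fun i hi => ?_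
  rw [mem_range] at hi
  rw [show n + 1 - 1 - i = n - i by omega, Nat.sub_sub_self (by omega)]

theorem eq_of_sum_range_mul_eq {R : Type*} [Ring R] {u x y : ℕ → R} (hu0 : u 0 = 1)
    (h : ∀ n, ∑ m ∈ range (n + 1), x m * u (n - m) = ∑ m ∈ range (n + 1), y m * u (n - m)) :
    x = y := by
  funext n
  induction n using Nat.strong_induction_on with
  | _ n ih =>
    have hn := h n
    rw [sum_range_succ, sum_range_succ, Nat.sub_self, hu0, mul_one, mul_one,
      sum_congr rfl fun m hm => by rw [ih m (mem_range.mp hm)]] at hn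
    exact add_left_cancel hn

section GeometricSum

variable {p : ℝ} {f : ℕ → ℝ}

theorem convPow_eq_zero_of_lt (hf0 : f 0 = 0) {k n : ℕ} (hnk : n < k) : convPow f k n = 0 := by
  induction k generalizing n with
  | zero => omega
  | succ k ih =>
    refine sum_eq_zero fun i hi => ?_
    rcases i.eq_zero_or_pos with rfl | hi0
    · rw [hf0, zero_mul]
    · rw [ih (by simp at hi; omega), mul_zero]

theorem geomSumPMF_eq_sum_range (hf0 : f 0 = 0) {n N : ℕ} (hnN : n < N) :
    geomSumPMF p f n = ∑ k ∈ range N, p * (1 - p) ^ k * convPow f k n :=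
  tsum_eq_sum fun k hk => by
    rw [convPow_eq_zero_of_lt hf0 (by simp at hk; omega), mul_zero]

theorem geomSumPMF_eq (hf0 : f 0 = 0) (n : ℕ) :
    geomSumPMF p f n = (if n = 0 then p else 0)
      + (1 - p) * ∑ i ∈ range (n + 1), f i * geomSumPMF p f (n - i) := by
  have hG : ∀ i ∈ range (n + 1), f i * geomSumPMF p f (n - i)
      = ∑ k ∈ range (n + 1), f i * (p * (1 - p) ^ k * convPow f k (n - i)) := fun i _ => by
    rw [geomSumPMF_eq_sum_range hf0 (by omega : n - i < n + 1), mul_sum]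
  rw [geomSumPMF_eq_sum_range hf0 (by omega : n < n + 2), sum_range_succ', sum_congr rfl hG,
    sum_comm, mul_sum, add_comm]
  simp only [convPow, pow_zero, mul_one, mul_ite, mul_zero, mul_sum]
  congr 1
  exact sum_congr rfl fun k _ => sum_congr rfl fun i _ => by ring

theorem geomSumPMF_renewal (hf0 : f 0 = 0) {u : ℕ → ℝ} (hu0 : u 0 = 1)
    (hu : ∀ n, u (n + 1) = u n - (1 - p) * f (n + 1)) (n : ℕ) :
    ∑ m ∈ range (n + 1), geomSumPMF p f m * u (n - m) = p := by
  induction n with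
  | zero => simpa [hu0, hf0] using geomSumPMF_eq (p := p) hf0 0
  | succ n ih =>
    have hstep : ∀ m ∈ range (n + 1), geomSumPMF p f m * u (n + 1 - m)
        = geomSumPMF p f m * u (n - m) - (1 - p) * (f (n - m + 1) * geomSumPMF p f m) :=
      fun m hm => by
        rw [show n + 1 - m = n - m + 1 by simp at hm; omega, hu]
        ring
    have hlast : geomSumPMF p f (n + 1)
        = (1 - p) * ∑ m ∈ range (n + 1), f (n - m + 1) * geomSumPMF p f m := by
      rw [geomSumPMF_eq hf0, sum_range_succ', hf0, zero_mul, add_zero, if_neg n.succ_ne_zero,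
        zero_add, ← sum_range_mul_reflect (fun i => f (i + 1))]
      simp only [Nat.add_sub_add_right]
    rw [sum_range_succ, sum_congr rfl hstep, sum_sub_distrib, ih, ← mul_sum, Nat.sub_self, hu0,
      hlast]
    ring

theorem geomSumPMF_tailToPMF_renewal (hp : p ≠ 1) {u : ℕ → ℝ} (hu0 : u 0 = 1) (n : ℕ) :
    ∑ m ∈ range (n + 1),
      geomSumPMF p (tailToPMF fun t => (u t - p) / (1 - p)) m * u (n - m) = p := by
  have hp' : 1 - p ≠ 0 := sub_ne_zero.2 hp.symm
  refine geomSumPMF_renewal (by simp [tailToPMF, hu0, div_self hp']) hu0 (fun n => ?_) n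
  simp only [tailToPMF]
  field_simp
  ring

end GeometricSum

section MarkovChain

variable {S Ω : Type*}

def path (X : ℕ → Ω → S) (t : ℕ) (ω : Ω) : Fin (t + 1) → S := fun i => X i ω

theorem path_succ (X : ℕ → Ω → S) (t : ℕ) (ω : Ω) :
    path X (t + 1) ω = Fin.snoc (path X t ω) (X (t + 1) ω) := by
  funext i
  induction i using Fin.lastCases <;> simp [path]

theorem path_eq_iff {X : ℕ → Ω → S} {t : ℕ} {ω : Ω} {g : Fin (t + 1) → S} :
    path X t ω = g ↔ ∀ i ≤ t, X i ω = g (Fin.clamp i t) := by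
  simp only [funext_iff, path, Fin.forall_iff, Nat.lt_succ_iff]
  refine forall₂_congr fun i hi => ?_
  rw [show Fin.clamp i t = ⟨i, by omega⟩ from Fin.ext (by simpa using hi)]

variable [MeasurableSpace Ω]

noncomputable def pathProb (μ : Measure Ω) (X : ℕ → Ω → S) (t : ℕ) (g : Fin (t + 1) → S) : ℝ :=
  μ.real (path X t ⁻¹' {g})

variable {μ : Measure Ω} {X : ℕ → Ω → S} {P : Matrix S S ℝ} {π : S → ℝ}

theorem pathProb_zero (hinit : ∀ s, μ.real {ω | X 0 ω = s} = π s) (g : Fin 1 → S) :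
    pathProb μ X 0 g = π (g 0) := by
  rw [← hinit, pathProb]
  congr 1
  ext ω
  simp [path, funext_iff, Fin.forall_fin_one]

theorem pathProb_snoc (hchain : IsMarkovChain μ X P) {t : ℕ} (h : Fin (t + 1) → S) (y : S) :
    pathProb μ X (t + 1) (Fin.snoc h y) = pathProb μ X t h * P (h (Fin.last t)) y := by
  have key := hchain t (fun i => h (Fin.clamp i t)) y
  simp only [← path_eq_iff, ← measureReal_def] at key
  rw [pathProb, pathProb, mul_comm, show Fin.last t = Fin.clamp t t from Fin.ext (by simp)]
  convert key using 2
  · ext ω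
    simp [path_succ, Fin.snoc_inj, and_comm]
  · rfl

variable [Fintype S] [DecidableEq S]

/-- The Markov property `𝔼[1_A(X₀, …, Xₜ) ψ(Xₙ)] = 𝔼[1_A(X₀, …, Xₜ) (Pⁿ⁻ᵗ ψ)(Xₜ)]`. -/
theorem sum_pathProb_take_mul (hchain : IsMarkovChain μ X P) {t n : ℕ} (htn : t ≤ n)
    (A : Finset (Fin (t + 1) → S)) (ψ : S → ℝ) :
    ∑ g : Fin (n + 1) → S with (Fin.take (t + 1) (Nat.succ_le_succ htn) g : Fin (t + 1) → S) ∈ A,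
        pathProb μ X n g * ψ (g (Fin.last n))
      = ∑ h ∈ A, pathProb μ X t h * (P ^ (n - t) *ᵥ ψ) (h (Fin.last t)) := by
  induction n, htn using Nat.le_induction generalizing ψ with
  | base => simp
  | succ n htn ih =>
    have htake : ∀ (h : Fin (n + 1) → S) (y : S),
        Fin.take (t + 1) (Nat.succ_le_succ (htn.trans n.le_succ)) (Fin.snoc h y : Fin (n + 2) → S)
          = Fin.take (t + 1) (Nat.succ_le_succ htn) h := fun h y => by
      rw [← Fin.take_init, Fin.init_snoc]
    have hpow : P ^ (n + 1 - t) *ᵥ ψ = P ^ (n - t) *ᵥ (P *ᵥ ψ) := by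
      rw [Nat.sub_add_comm htn, pow_succ, ← mulVec_mulVec]
    rw [hpow, ← ih, sum_filter, sum_filter, Fintype.sum_pi_fin_succ]
    refine sum_congr rfl fun h _ => ?_
    simp only [htake, pathProb_snoc hchain, Fin.snoc_last]
    split_ifs
    · simp only [mulVec, dotProduct, mul_sum, mul_assoc]
    · simp

theorem sum_pathProb_mul_last (hchain : IsMarkovChain μ X P)
    (hinit : ∀ s, μ.real {ω | X 0 ω = s} = π s) (hstat : π ᵥ* P = π) (n : ℕ) (ψ : S → ℝ) :
    ∑ g : Fin (n + 1) → S, pathProb μ X n g * ψ (g (Fin.last n)) = π ⬝ᵥ ψ := by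
  have h := sum_pathProb_take_mul hchain (Nat.zero_le n) univ ψ
  simp only [mem_univ, filter_true, Nat.sub_zero] at h
  rw [h, ← (Equiv.funUnique (Fin 1) S).symm.sum_comp, ← vecMul_pow_eq_self hstat n,
    ← dotProduct_mulVec]
  simp [pathProb_zero hinit, dotProduct]

theorem measureReal_path_preimage [IsProbabilityMeasure μ] (hchain : IsMarkovChain μ X P)
    (hinit : ∀ s, μ.real {ω | X 0 ω = s} = π s) (hstat : π ᵥ* P = π) (hπ : ∑ s, π s = 1)
    (n : ℕ) (A : Finset (Fin (n + 1) → S)) :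
    μ.real (path X n ⁻¹' A) = ∑ g ∈ A, pathProb μ X n g := by
  refine measureReal_preimage_eq_sum ?_ A
  simpa [pathProb, dotProduct, hπ] using sum_pathProb_mul_last hchain hinit hstat n 1

end MarkovChain

section Hitting

variable {S : Type*} [Fintype S] [DecidableEq S] {j : S} {Ω : Type*} {X : ℕ → Ω → S}

variable (j) in
def firstHit (m : ℕ) : Finset (Fin (m + 1) → S) :=
  {g | g (Fin.last m) = j ∧ ∀ i < Fin.last m, g i ≠ j}

theorem take_mem_firstHit_iff {n : ℕ} {g : Fin (n + 1) → S} {i : Fin (n + 1)} :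
    (Fin.take (i + 1) (Nat.succ_le_succ i.is_le) g : Fin (i + 1) → S) ∈ firstHit j i
      ↔ g i = j ∧ ∀ k < i, g k ≠ j := by
  have hlast : Fin.castLE (Nat.succ_le_succ i.is_le) (Fin.last i) = i := Fin.ext (by simp)
  simp only [firstHit, mem_filter, mem_univ, true_and, Fin.take, Fin.forall_iff, Fin.lt_def,
    Fin.castLE_mk, Fin.val_last, hlast]
  exact and_congr_right fun _ =>
    ⟨fun h k _ hk => h k (by omega) hk, fun h k _ hk => h k (by omega) hk⟩

theorem path_mem_firstHit_iff {m : ℕ} {ω : Ω} :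
    path X m ω ∈ firstHit j m ↔ X m ω = j ∧ ∀ k < m, X k ω ≠ j := by
  simp only [firstHit, mem_filter, mem_univ, true_and, path, Fin.forall_iff, Fin.lt_def,
    Fin.val_last]
  exact and_congr_right fun _ => ⟨fun h k hk => h k (by omega) hk, fun h k _ hk => h k hk⟩

variable [MeasurableSpace Ω] {μ : Measure Ω} {P : Matrix S S ℝ} {π : S → ℝ}

/-- Splitting `ℙ(Xₙ = j) = π j` according to the time of the first visit to `j`. -/
theorem sum_firstHit_mul_pow (hchain : IsMarkovChain μ X P)
    (hinit : ∀ s, μ.real {ω | X 0 ω = s} = π s) (hstat : π ᵥ* P = π) (n : ℕ) :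
    ∑ m ∈ range (n + 1), (∑ g ∈ firstHit j m, pathProb μ X m g) * (P ^ (n - m)) j j = π j := by
  have hsplit : ∀ g : Fin (n + 1) → S,
      pathProb μ X n g * (Pi.single j 1 : S → ℝ) (g (Fin.last n))
        = ∑ i : Fin (n + 1), if (Fin.take (i + 1) (Nat.succ_le_succ i.is_le) g : Fin (i + 1) → S)
            ∈ firstHit j i then pathProb μ X n g * (Pi.single j 1 : S → ℝ) (g (Fin.last n))
            else 0 := by
    intro g
    by_cases hg : g (Fin.last n) = j
    · obtain ⟨i, hi, huniq⟩ := existsUnique_first (p := (g · = j)) ⟨_, hg⟩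
      rw [Fintype.sum_eq_single i fun k hk => if_neg (mt take_mem_firstHit_iff.1
        (mt (huniq k) hk)), if_pos (take_mem_firstHit_iff.2 hi)]
    · simp [hg]
  calc ∑ m ∈ range (n + 1), (∑ g ∈ firstHit j m, pathProb μ X m g) * (P ^ (n - m)) j j
      = ∑ i : Fin (n + 1), ∑ h ∈ firstHit j i,
          pathProb μ X i h * (P ^ (n - i) *ᵥ Pi.single j 1) (h (Fin.last i)) := by
        rw [← Fin.sum_univ_eq_sum_range (fun m => (∑ g ∈ firstHit j m, pathProb μ X m g)
          * (P ^ (n - m)) j j)]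
        refine sum_congr rfl fun i _ => ?_
        rw [sum_mul]
        refine sum_congr rfl fun h hh => ?_
        rw [(mem_filter.1 hh).2.1, mulVec_single_one, col_apply]
    _ = ∑ i : Fin (n + 1), ∑ g : Fin (n + 1) → S with
          (Fin.take (i + 1) (Nat.succ_le_succ i.is_le) g : Fin (i + 1) → S) ∈ firstHit j i,
          pathProb μ X n g * (Pi.single j 1 : S → ℝ) (g (Fin.last n)) :=
        sum_congr rfl fun i _ => (sum_pathProb_take_mul hchain i.is_le _ _).symm
    _ = π j := by
      simp only [sum_filter]
      rw [sum_comm, ← sum_congr rfl fun g _ => hsplit g, sum_pathProb_mul_last hchain hinit hstat,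
        dotProduct_single_one]

theorem measureReal_hitTime_eq (hnever : μ {ω | ∀ t, X t ω ≠ j} = 0) {W : Ω → ℕ}
    (hW : ∀ ω, W ω = sInf {t | X t ω = j}) (m : ℕ) :
    μ.real {ω | W ω = m} = μ.real (path X m ⁻¹' firstHit j m) := by
  have hsub : path X m ⁻¹' firstHit j m ⊆ {ω | W ω = m} := fun ω hω => by
    rw [Set.mem_preimage, mem_coe, path_mem_firstHit_iff] at hω
    rw [Set.mem_ofPred_eq, hW, Nat.sInf_setOf_eq_iff ⟨m, hω.1⟩]
    exact hω
  have hsdiff : {ω | W ω = m} \ path X m ⁻¹' firstHit j m ⊆ {ω | ∀ t, X t ω ≠ j} := by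
    rintro ω ⟨hWm, hnot⟩ t ht
    rw [Set.mem_ofPred_eq, hW, Nat.sInf_setOf_eq_iff ⟨t, ht⟩] at hWm
    exact hnot (path_mem_firstHit_iff.2 hWm)
  rw [measureReal_def, measureReal_def,
    measure_eq_measure_of_null_sdiff hsub (measure_mono_null hsdiff hnever)]

theorem measureReal_avoid_add_le [IsProbabilityMeasure μ] (hchain : IsMarkovChain μ X P)
    (hinit : ∀ s, μ.real {ω | X 0 ω = s} = π s) (hstat : π ᵥ* P = π) (hπ : ∑ s, π s = 1)
    (hP : P *ᵥ 1 = 1) {ε : ℝ} {r : ℕ} (hε : ∀ s, ε ≤ (P ^ r) s j) (t : ℕ) :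
    μ.real {ω | ∀ i ≤ t + r, X i ω ≠ j} ≤ (1 - ε) * μ.real {ω | ∀ i ≤ t, X i ω ≠ j} := by
  set A : Finset (Fin (t + 1) → S) := {h | ∀ i, h i ≠ j}
  set B : Finset (Fin (t + r + 1) → S) :=
    {g | (Fin.take (t + 1) (by omega) g : Fin (t + 1) → S) ∈ A ∧ g (Fin.last _) ≠ j}
  set ψ : S → ℝ := 1 - Pi.single j 1
  have hA : {ω | ∀ i ≤ t, X i ω ≠ j} = path X t ⁻¹' A := by
    ext ω
    simp [A, path, Fin.forall_iff]
  have hB : {ω | ∀ i ≤ t + r, X i ω ≠ j} ⊆ path X (t + r) ⁻¹' B := fun ω hω => by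
    simp only [B, A, Set.mem_preimage, mem_coe, mem_filter, mem_univ, true_and, path, Fin.take]
    exact ⟨fun i => hω i (by have := i.is_lt; omega), hω _ le_rfl⟩
  have hψ : ∀ s, (P ^ r *ᵥ ψ) s = 1 - (P ^ r) s j := fun s => by
    simp [ψ, mulVec_sub, Matrix.pow_mulVec_one hP]
  calc μ.real {ω | ∀ i ≤ t + r, X i ω ≠ j} ≤ μ.real (path X (t + r) ⁻¹' B) := measureReal_mono hB
    _ = ∑ g : Fin (t + r + 1) → S with (Fin.take (t + 1) (by omega) g : Fin (t + 1) → S) ∈ A,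
          pathProb μ X (t + r) g * ψ (g (Fin.last _)) := by
      rw [measureReal_path_preimage hchain hinit hstat hπ, sum_filter, sum_filter]
      refine sum_congr rfl fun g _ => ?_
      by_cases hg : g (Fin.last _) = j <;> simp [ψ, hg]
    _ = ∑ h ∈ A, pathProb μ X t h * (P ^ r *ᵥ ψ) (h (Fin.last t)) := by
      rw [sum_pathProb_take_mul hchain (Nat.le_add_right t r), Nat.add_sub_cancel_left]
    _ ≤ ∑ h ∈ A, pathProb μ X t h * (1 - ε) :=
      sum_le_sum fun h _ => mul_le_mul_of_nonneg_left (by rw [hψ]; linarith [hε (h (Fin.last t))])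
        measureReal_nonneg
    _ = (1 - ε) * μ.real {ω | ∀ i ≤ t, X i ω ≠ j} := by
      rw [← sum_mul, mul_comm, hA, measureReal_path_preimage hchain hinit hstat hπ]

theorem measure_forall_ne_eq_zero [IsProbabilityMeasure μ] (hchain : IsMarkovChain μ X P)
    (hinit : ∀ s, μ.real {ω | X 0 ω = s} = π s) (hstat : π ᵥ* P = π) (hπ : ∑ s, π s = 1)
    (hP : P *ᵥ 1 = 1) (herg : ∃ r, ∀ s s', 0 < (P ^ r) s s') :
    μ {ω | ∀ t, X t ω ≠ j} = 0 := by
  obtain ⟨r, hr⟩ := herg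
  obtain ⟨s₀, -, hs₀⟩ := univ.exists_min_image (fun s => (P ^ r) s j) ⟨j, mem_univ j⟩
  -- capped at `1` so that the contraction factor `1 - ε` is nonnegative
  set ε := min 1 ((P ^ r) s₀ j)
  have hε1 : 0 ≤ 1 - ε := sub_nonneg.2 (min_le_left _ _)
  have hε : ∀ s, ε ≤ (P ^ r) s j := fun s => (min_le_right _ _).trans (hs₀ s (mem_univ s))
  have hdecay : ∀ k, μ.real {ω | ∀ i ≤ k * r, X i ω ≠ j} ≤ (1 - ε) ^ k := by
    intro k
    induction k with
    | zero => simp [measureReal_le_one]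
    | succ k ih =>
      calc _ ≤ (1 - ε) * μ.real {ω | ∀ i ≤ k * r, X i ω ≠ j} := by
            rw [Nat.succ_mul]
            exact measureReal_avoid_add_le hchain hinit hstat hπ hP hε _
        _ ≤ (1 - ε) ^ (k + 1) := by
            rw [pow_succ']
            exact mul_le_mul_of_nonneg_left ih hε1
  have hnull : μ.real {ω | ∀ t, X t ω ≠ j} ≤ 0 :=
    ge_of_tendsto'
      (tendsto_pow_atTop_nhds_zero_of_lt_one hε1 (by linarith [lt_min one_pos (hr s₀ j)]))
      fun k => (measureReal_mono fun ω (hω : ∀ t, X t ω ≠ j) i (_ : i ≤ k * r) => hω i).trans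
        (hdecay k)
  exact (measureReal_eq_zero_iff (measure_ne_top μ _)).1 (le_antisymm hnull measureReal_nonneg)

end Hitting

theorem hitting_eq_geom_sum_general {S : Type*} [Fintype S] [DecidableEq S]
    {Ω : Type*} [MeasurableSpace Ω] (μ : Measure Ω) [IsProbabilityMeasure μ]
    (X : ℕ → Ω → S)
    (P : Matrix S S ℝ) (π : S → ℝ) (j : S)
    (hP1 : ∀ i, ∑ k, P i k = 1)
    (herg : ∃ t, ∀ i k, 0 < (P ^ t) i k)
    (hπsum : ∑ s, π s = 1)
    (hstat : Matrix.vecMul π P = π) (hπj : π j < 1)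
    (hchain : IsMarkovChain μ (fun t => X t) (fun a b => P a b))
    (hinit : ∀ s, (μ {ω | X 0 ω = s}).toReal = π s)
    (W : Ω → ℕ) (hW : ∀ ω, W ω = sInf {t : ℕ | X t ω = j}) :
    ∀ n : ℕ, (μ {ω | W ω = n}).toReal
      = geomSumPMF (π j)
          (tailToPMF (fun t => ((P ^ t) j j - π j) / (1 - π j))) n := by
  replace hchain : IsMarkovChain μ X P := hchain
  have hP : P *ᵥ 1 = 1 := funext fun i => by simp [mulVec, dotProduct, hP1]
  have hnever := measure_forall_ne_eq_zero (j := j) hchain hinit hstat hπsum hP herg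
  have hlaw : ∀ m, μ.real {ω | W ω = m} = ∑ g ∈ firstHit j m, pathProb μ X m g := fun m => by
    rw [measureReal_hitTime_eq hnever hW, measureReal_path_preimage hchain hinit hstat hπsum]
  have hrenewal : ∀ n, ∑ m ∈ range (n + 1), μ.real {ω | W ω = m} * (P ^ (n - m)) j j = π j :=
    fun n => by simpa only [hlaw] using sum_firstHit_mul_pow hchain hinit hstat n
  have hgeom := geomSumPMF_tailToPMF_renewal hπj.ne (u := fun t => (P ^ t) j j) (by simp)
  exact congrFun (eq_of_sum_range_mul_eq (u := fun t => (P ^ t) j j) (by simp)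
    fun n => (hrenewal n).trans (hgeom n).symm)

/-- if `X₀ ~ π`, `j` satisfies `π_y ℙ(X_t = j) ≤ π_j ℙ(X_t = y)` for all
`t, y` when `X₀ ~ π^{(j)}`, and `T^{(j)}` has tail `(P^t(j,j) - π_j)/(1-π_j)`, then the
hitting time `W_j` is distributed as the sum of `N ~ Geom(π_j)` IID copies of `T^{(j)}`. -/
theorem hitting_eq_geom_sum {S : Type*} [Fintype S] [DecidableEq S] [Nonempty S]
    {Ω : Type*} [MeasurableSpace Ω] (μ : Measure Ω) [IsProbabilityMeasure μ]
    (X : ℕ → Ω → S)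
    (P : Matrix S S ℝ) (π : S → ℝ) (j : S)
    (hP0 : ∀ i k, 0 ≤ P i k) (hP1 : ∀ i, ∑ k, P i k = 1)
    (hirr : ∀ i k, ∃ t, 0 < (P ^ t) i k)
    (herg : ∃ t, ∀ i k, 0 < (P ^ t) i k)
    (hπpos : ∀ s, 0 < π s) (hπsum : ∑ s, π s = 1)
    (hstat : Matrix.vecMul π P = π) (hπj : π j < 1)
    (hchain : IsMarkovChain μ (fun t => X t) (fun a b => P a b))
    (hinit : ∀ s, (μ {ω | X 0 ω = s}).toReal = π s)
    -- the condition on `j`, for the chain started from `π^{(j)}`, stated via the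
    -- time-`t` distribution `π^{(j)} P^t`:
    (hineq : ∀ (t : ℕ) (y : S),
      π y * Matrix.vecMul
          (fun s => (π s - if s = j then π j else 0) / (1 - π j)) (P ^ t) j
        ≤ π j * Matrix.vecMul
          (fun s => (π s - if s = j then π j else 0) / (1 - π j)) (P ^ t) y)
    (W : Ω → ℕ) (hW : ∀ ω, W ω = sInf {t : ℕ | X t ω = j}) :
    ∀ n : ℕ, (μ {ω | W ω = n}).toReal
      = geomSumPMF (π j)
          (tailToPMF (fun t => ((P ^ t) j j - π j) / (1 - π j))) n :=
  hitting_eq_geom_sum_general μ X P π j hP1 herg hπsum hstat hπj hchain hinit W hW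
end

section
/- Let $W$ and $T$ be nonnegative integer-valued random variables with $\mathbb{P}(W = 0) = p \in (0,1)$, $T$ independent of $W$, and suppose $W + T$ has the same distribution as $W$ conditioned on $\{W > 0\}$. Then $W$ is equal in distribution to $T_1 + \cdots + T_N$ where $N \sim \mathrm{Geom}(p)$ and $T_1, T_2, \ldots$ are IID copies of $T$ independent of $N$. -/
open MeasureTheory Finset

lemma convPow_eq_zero {f : ℕ → ℝ} (hf0 : f 0 = 0) :
    ∀ k n, n < k → convPow f k n = 0 := by
  intro k
  induction k with
  | zero => intro n h; omega
  | succ k ih =>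
    intro n h
    simp only [convPow]
    apply Finset.sum_eq_zero
    intro i hi
    simp only [Finset.mem_range] at hi
    rcases Nat.eq_zero_or_pos i with h0 | h0
    · simp [h0, hf0]
    · rw [ih (n - i) (by omega), mul_zero]

lemma geomSumPMF_eq_sum {p : ℝ} {f : ℕ → ℝ} (hf0 : f 0 = 0) (n : ℕ) :
    geomSumPMF p f n = ∑ k ∈ range (n + 1), p * (1 - p) ^ k * convPow f k n := by
  apply tsum_eq_sum
  intro k hk
  simp only [Finset.mem_range] at hk
  rw [convPow_eq_zero hf0 k n (by omega), mul_zero]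

lemma conv_meas {Ω : Type*} [MeasurableSpace Ω]
    (μ : Measure Ω) [IsProbabilityMeasure μ]
    (W T : Ω → ℕ) (hW : Measurable W) (hT : Measurable T)
    (hindep : ProbabilityTheory.IndepFun W T μ) (n : ℕ) :
    (μ {ω | W ω + T ω = n}).toReal
      = ∑ i ∈ range (n + 1), (μ {ω | W ω = i}).toReal * (μ {ω | T ω = n - i}).toReal := by
  have hset : {ω | W ω + T ω = n}
      = ⋃ i ∈ range (n + 1), (W ⁻¹' {i} ∩ T ⁻¹' {n - i}) := by
    ext ω
    simp only [Set.mem_setOf_eq, Set.mem_iUnion, Set.mem_inter_iff, Set.mem_preimage,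
      Set.mem_singleton_iff, Finset.mem_range]
    constructor
    · intro h; exact ⟨W ω, by omega, rfl, by omega⟩
    · rintro ⟨i, hi, h1, h2⟩; omega
  rw [hset, measure_biUnion_finset ?_ ?_]
  · rw [ENNReal.toReal_sum (fun i _ => measure_ne_top μ _)]
    apply Finset.sum_congr rfl
    intro i _
    rw [hindep.measure_inter_preimage_eq_mul _ _ (measurableSet_singleton i)
      (measurableSet_singleton (n - i)), ENNReal.toReal_mul]
    rfl
  · intro i _ j _ hij
    apply Set.disjoint_left.mpr
    rintro ω ⟨h1, _⟩ ⟨h3, _⟩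
    exact hij (by simp only [Set.mem_preimage, Set.mem_singleton_iff] at h1 h3; omega)
  · intro i _
    exact (hW (measurableSet_singleton i)).inter (hT (measurableSet_singleton (n - i)))

/-- if `W, T` are independent `ℕ`-valued random variables with
`ℙ(W = 0) = p ∈ (0,1)` and `W + T =ᵈ (W | W > 0)`, then `W` is distributed as the sum
of `N ~ Geom(p)` IID copies of `T`. -/
theorem geom_sum_characterization {Ω : Type*} [MeasurableSpace Ω]
    (μ : Measure Ω) [IsProbabilityMeasure μ]
    (W T : Ω → ℕ) (hW : Measurable W) (hT : Measurable T)
    (p : ℝ) (hp0 : 0 < p) (hp1 : p < 1)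
    (hWp : (μ {ω | W ω = 0}).toReal = p)
    (hindep : ProbabilityTheory.IndepFun W T μ)
    (hcond : ∀ n : ℕ, (μ {ω | W ω + T ω = n}).toReal
      = (μ {ω | W ω = n ∧ 0 < W ω}).toReal / (1 - p)) :
    ∀ n : ℕ, (μ {ω | W ω = n}).toReal
      = geomSumPMF p (fun m => (μ {ω | T ω = m}).toReal) n := by
  set f : ℕ → ℝ := fun m => (μ {ω | T ω = m}).toReal with hfdef
  set w : ℕ → ℝ := fun m => (μ {ω | W ω = m}).toReal with hwdef
  have hp1' : (1 : ℝ) - p ≠ 0 := by linarith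
  have hconv : ∀ n, (μ {ω | W ω + T ω = n}).toReal
      = ∑ i ∈ range (n + 1), w i * f (n - i) := conv_meas μ W T hW hT hindep
  -- f 0 = 0
  have f0 : f 0 = 0 := by
    have h0 := hcond 0
    rw [hconv 0] at h0
    have hempty : {ω | W ω = 0 ∧ 0 < W ω} = (∅ : Set Ω) := by
      ext ω; simp only [Set.mem_setOf_eq, Set.mem_empty_iff_false, iff_false]
      rintro ⟨h1, h2⟩; omega
    rw [hempty] at h0
    simp only [measure_empty, ENNReal.toReal_zero, zero_div, zero_add,
      Finset.sum_range_one, Nat.sub_zero] at h0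
    have hw0 : w 0 = p := hWp
    rw [hw0] at h0
    exact (mul_eq_zero.mp h0).resolve_left (ne_of_gt hp0)
  -- recursion for n > 0
  have hrec : ∀ n : ℕ, 0 < n →
      w n = (1 - p) * ∑ i ∈ range (n + 1), w i * f (n - i) := by
    intro n hn
    have h := hcond n
    rw [hconv n] at h
    have hset : {ω | W ω = n ∧ 0 < W ω} = {ω | W ω = n} := by
      ext ω; simp only [Set.mem_setOf_eq, and_iff_left_iff_imp]
      intro h1; omega
    rw [hset] at h
    have : (μ {ω | W ω = n}).toReal = w n := rfl
    rw [this] at h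
    field_simp at h
    linarith [h]
  intro n
  induction n using Nat.strong_induction_on with
  | _ n ih' =>
    have ih : ∀ m, m < n → w m = geomSumPMF p f m := ih'
    show w n = geomSumPMF p f n
    rw [geomSumPMF_eq_sum f0]
    rcases Nat.eq_zero_or_pos n with h0 | h0
    · subst h0
      simpa [convPow] using hWp
    · have hstep := hrec n h0
      have hre : ∑ i ∈ range (n + 1), w i * f (n - i)
          = ∑ j ∈ range (n + 1), f j * w (n - j) := by
        rw [← Finset.sum_range_reflect (fun i => w i * f (n - i)) (n + 1)]
        apply Finset.sum_congr rfl
        intro j hj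
        simp only [Finset.mem_range] at hj
        have h1 : n + 1 - 1 - j = n - j := by omega
        have h2 : n - (n - j) = j := by omega
        simp only [h1, h2, mul_comm]
      have key : ∀ j ∈ range (n + 1), f j * w (n - j)
          = f j * ∑ k ∈ range n, p * (1 - p) ^ k * convPow f k (n - j) := by
        intro j hj
        simp only [Finset.mem_range] at hj
        rcases Nat.eq_zero_or_pos j with hj0 | hj0
        · rw [hj0, f0, zero_mul, zero_mul]
        · rw [ih (n - j) (by omega), geomSumPMF_eq_sum f0]
          congr 1
          apply Finset.sum_subset
          · intro k hk
            simp only [Finset.mem_range] at hk ⊢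
            omega
          · intro k hk hk'
            simp only [Finset.mem_range] at hk hk'
            rw [convPow_eq_zero f0 k (n - j) (by omega), mul_zero]
      rw [hstep, hre, Finset.sum_congr rfl key]
      have hswap : ∑ j ∈ range (n + 1),
            f j * ∑ k ∈ range n, p * (1 - p) ^ k * convPow f k (n - j)
          = ∑ k ∈ range n, p * (1 - p) ^ k * convPow f (k + 1) n := by
        simp only [Finset.mul_sum]
        rw [Finset.sum_comm]
        apply Finset.sum_congr rfl
        intro k _
        show _ = p * (1 - p) ^ k * convPow f (k + 1) n
        simp only [convPow, Finset.mul_sum]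
        apply Finset.sum_congr rfl
        intro j _
        ring
      rw [hswap, Finset.mul_sum, Finset.sum_range_succ']
      have hc0 : convPow f 0 n = 0 := by
        simp [convPow]; omega
      rw [hc0]
      simp only [mul_zero, add_zero, pow_zero]
      apply Finset.sum_congr rfl
      intro k _
      ring
end

section
/- For the two-state chain on $\{0,1\}$ with $P(0,0)=P(0,1)=1/2$, $P(1,0)=1/2-\delta$, $P(1,1)=1/2+\delta$, $0 \le \delta < 1/2$: the hitting time $W_1$ of state $1$ from stationarity is equal in distribution to $T_1 + \cdots + T_N$, where $N \sim \mathrm{Geom}(\pi_1)$ with $\pi_1 = \frac{1}{2(1-\delta)}$, and the $T_i$ are IID with $\mathbb{P}(T_i > t) = \delta^t$ for $t \ge 0$, independent of $N$. -/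
open MeasureTheory Finset

lemma geomSum_formula (δ : ℝ) (hδ0 : 0 ≤ δ) (hδ1 : δ < 1/2) :
    ∀ n, geomSumPMF (1/(2*(1-δ))) (fun m => if m = 0 then 0 else δ^(m-1) - δ^m) n
      = if n = 0 then 1/(2*(1-δ)) else (1-2*δ)/(2*(1-δ)) / 2^n := by
  have h1δ : (1:ℝ) - δ ≠ 0 := by nlinarith
  have h2δ : 2*δ - 1 ≠ 0 := by nlinarith
  have h2δ' : 2*δ ≠ 1 := by intro h; apply h2δ; linarith
  set p : ℝ := 1/(2*(1-δ)) with hp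
  set f : ℕ → ℝ := fun m => if m = 0 then 0 else δ^(m-1) - δ^m with hf
  have hf0 : f 0 = 0 := by simp [hf]
  have hfin : ∀ m, geomSumPMF p f m
      = ∑ k ∈ Finset.range (m+1), p*(1-p)^k * convPow f k m := by
    intro m
    apply tsum_eq_sum
    intro k hk
    have : m < k := by simp only [Finset.mem_range] at hk; omega
    rw [convPow_eq_zero hf0 k m this, mul_zero]
  intro n
  induction n using Nat.strong_induction_on with
  | _ n ih =>
    match n with
    | 0 => simp [hfin, convPow]
    | (m+1) =>
      rw [hfin, Finset.sum_range_succ']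
      have h0 : convPow f 0 (m+1) = 0 := by simp [convPow]
      rw [h0]
      simp only [mul_zero, add_zero]
      have hstep : ∀ k, convPow f (k+1) (m+1)
          = ∑ i ∈ Finset.range (m+2), f i * convPow f k (m+1-i) := fun k => by
        rw [convPow]
      calc (∑ k ∈ Finset.range (m+1), p*(1-p)^(k+1) * convPow f (k+1) (m+1))
          = ∑ i ∈ Finset.range (m+2), ∑ k ∈ Finset.range (m+1),
              p*(1-p)^(k+1) * (f i * convPow f k (m+1-i)) := by
            rw [Finset.sum_comm]
            apply Finset.sum_congr rfl
            intro k _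
            rw [hstep k, Finset.mul_sum]
        _ = ∑ i ∈ Finset.range (m+2), (1-p) * f i *
              (if m+1-i = 0 then p else (1-2*δ)/(2*(1-δ))/2^(m+1-i)) := by
            apply Finset.sum_congr rfl
            intro i hi
            simp only [Finset.mem_range] at hi
            rcases Nat.eq_zero_or_pos i with h0i | h0i
            · subst h0i
              rw [hf0]
              simp [Finset.sum_eq_zero]
            · have hsub : Finset.range (m+1-i+1) ⊆ Finset.range (m+1) := by
                apply Finset.range_subset_range.mpr; omega
              have htr : (∑ k ∈ Finset.range (m+1), p*(1-p)^k * convPow f k (m+1-i))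
                  = ∑ k ∈ Finset.range (m+1-i+1), p*(1-p)^k * convPow f k (m+1-i) := by
                symm
                apply Finset.sum_subset hsub
                intro k _ hk
                simp only [Finset.mem_range] at hk
                rw [convPow_eq_zero hf0 k (m+1-i) (by omega), mul_zero]
              have hih := ih (m+1-i) (by omega)
              rw [hfin (m+1-i)] at hih
              calc (∑ k ∈ Finset.range (m+1), p*(1-p)^(k+1) * (f i * convPow f k (m+1-i)))
                  = (1-p) * f i * (∑ k ∈ Finset.range (m+1), p*(1-p)^k * convPow f k (m+1-i)) := by
                    rw [Finset.mul_sum]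
                    apply Finset.sum_congr rfl
                    intro k _
                    ring
                _ = (1-p) * f i * (if m+1-i = 0 then p else (1-2*δ)/(2*(1-δ))/2^(m+1-i)) := by
                    rw [htr, hih]
        _ = (∑ i ∈ Finset.range (m+1), (1-p) * f i *
              (if m+1-i = 0 then p else (1-2*δ)/(2*(1-δ))/2^(m+1-i)))
              + (1-p) * (δ^m - δ^(m+1)) * p := by
            rw [Finset.sum_range_succ]
            congr 1
            simp [hf]
        _ = (∑ i ∈ Finset.range (m+1),
              ((1-p)*(1-2*δ)/(2*2^m)) * (if i = 0 then 0 else (2*δ)^(i-1)))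
              + (1-p) * (δ^m - δ^(m+1)) * p := by
            congr 1
            apply Finset.sum_congr rfl
            intro i hi
            simp only [Finset.mem_range] at hi
            match i with
            | 0 => simp [hf0]
            | (j+1) =>
              have hj : j ≤ m := by omega
              have hne : m+1-(j+1) ≠ 0 := by omega
              rw [if_neg hne, if_neg (by omega : (j:ℕ)+1 ≠ 0)]
              have he : m+1-(j+1) = m - j := by omega
              rw [he]
              have h2 : ((2:ℝ))^(m-j) = 2^m / 2^j := by
                rw [eq_div_iff (by positivity), ← pow_add]
                congr 1
                omega
              simp only [hf, if_neg (by omega : (j:ℕ)+1 ≠ 0), Nat.add_sub_cancel]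
              rw [h2, mul_pow]
              field_simp
              ring
        _ = ((1-p)*(1-2*δ)/(2*2^m)) * (((2*δ)^m - 1)/(2*δ - 1))
              + (1-p) * (δ^m - δ^(m+1)) * p := by
            congr 1
            rw [← Finset.mul_sum]
            congr 1
            rw [Finset.sum_range_succ']
            simp only [if_neg (Nat.succ_ne_zero _), Nat.add_sub_cancel]
            rw [if_pos trivial, add_zero]
            exact geom_sum_eq h2δ' m
        _ = if m+1 = 0 then p else (1-2*δ)/(2*(1-δ))/2^(m+1) := by
            rw [if_neg (Nat.succ_ne_zero m), hp]
            have hpw : (2:ℝ)^(m+1) = 2*2^m := by ring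
            field_simp
            ring

lemma fin2_eq_zero : ∀ x : Fin 2, x ≠ 1 → x = 0 := by decide

/-- for the two-state chain with `P = !![1/2, 1/2; 1/2-δ, 1/2+δ]` started
from stationarity, the hitting time `W₁` of state `1` is distributed as a geometric
(`π₁ = 1/(2(1-δ))`) sum of IID random variables `T` with `ℙ(T > t) = δ^t`
(so `ℙ(T = 0) = 0` and `ℙ(T = n) = δ^{n-1} - δ^n` for `n ≥ 1`). -/
theorem two_state_geom_sum {Ω : Type*} [MeasurableSpace Ω]
    (μ : Measure Ω) [IsProbabilityMeasure μ]
    (X : ℕ → Ω → Fin 2) (δ : ℝ) (hδ0 : 0 ≤ δ) (hδ1 : δ < 1 / 2)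
    (P : Matrix (Fin 2) (Fin 2) ℝ)
    (hP : P = !![1/2, 1/2; 1/2 - δ, 1/2 + δ])
    (hchain : IsMarkovChain μ (fun t => X t) (fun a b => P a b))
    (hinit : (μ {ω | X 0 ω = 0}).toReal = (1 - 2*δ) / (2*(1 - δ))
      ∧ (μ {ω | X 0 ω = 1}).toReal = 1 / (2*(1 - δ)))
    (W : Ω → ℕ) (hW : ∀ ω, W ω = sInf {t : ℕ | X t ω = 1}) :
    ∀ n : ℕ, (μ {ω | W ω = n}).toReal
      = geomSumPMF (1 / (2*(1 - δ)))
          (fun m => if m = 0 then 0 else δ ^ (m - 1) - δ ^ m) n := by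
  intro n
  rw [geomSum_formula δ hδ0 hδ1 n]
  have hP00 : P 0 0 = 1/2 := by rw [hP]; norm_num
  have hP01 : P 0 1 = 1/2 := by rw [hP]; norm_num
  -- cylinder probabilities
  have hcyl : ∀ t, (μ {ω | ∀ i ≤ t, X i ω = 0}).toReal
      = (1-2*δ)/(2*(1-δ)) / 2^t := by
    intro t
    induction t with
    | zero =>
      have hs : {ω | ∀ i ≤ 0, X i ω = 0} = {ω | X 0 ω = 0} := by
        ext ω; simp [Nat.le_zero]
      rw [hs, hinit.1]; norm_num
    | succ t iht =>
      have hs : {ω | ∀ i ≤ t+1, X i ω = 0}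
          = {ω | X (t+1) ω = (0:Fin 2) ∧ ∀ i ≤ t, X i ω = 0} := by
        ext ω
        constructor
        · intro h
          exact ⟨h (t+1) le_rfl, fun i hi => h i (by omega)⟩
        · rintro ⟨h1, h2⟩ i hi
          rcases Nat.lt_succ_iff_lt_or_eq.mp (Nat.lt_succ_of_le hi) with h | h
          · exact h2 i (by omega)
          · rw [h]; exact h1
      rw [hs]
      have := hchain t (fun _ => 0) 0
      simp only at this
      rw [this, iht, hP00]
      ring
  match n with
  | 0 =>
    rw [if_pos rfl]
    -- never-hit set has measure zero
    set N : Set Ω := {ω | ∀ t, X t ω ≠ 1} with hN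
    have hNsub : ∀ t, N ⊆ {ω | ∀ i ≤ t, X i ω = 0} := by
      intro t ω hω i _
      exact fin2_eq_zero _ (hω i)
    have hNle : ∀ t, (μ N).toReal ≤ (1-2*δ)/(2*(1-δ)) / 2^t := by
      intro t
      rw [← hcyl t]
      exact ENNReal.toReal_mono (measure_ne_top μ _) (measure_mono (hNsub t))
    have htend : Filter.Tendsto (fun t : ℕ => (1-2*δ)/(2*(1-δ)) / 2^t)
        Filter.atTop (nhds 0) := by
      have h := (tendsto_pow_atTop_nhds_zero_of_lt_one
        (by norm_num : (0:ℝ) ≤ 1/2) (by norm_num : (1/2:ℝ) < 1)).const_mul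
        ((1-2*δ)/(2*(1-δ)))
      simp only [mul_zero] at h
      convert h using 2 with t
      rw [div_pow, one_pow]
      ring
    have hN0 : (μ N).toReal ≤ 0 := ge_of_tendsto' htend hNle
    have hNz : μ N = 0 := by
      have h0 : (μ N).toReal = 0 := le_antisymm hN0 ENNReal.toReal_nonneg
      rcases (ENNReal.toReal_eq_zero_iff _).mp h0 with h | h
      · exact h
      · exact absurd h (measure_ne_top μ N)
    have hset : {ω | W ω = 0} = {ω | X 0 ω = 1} ∪ N := by
      ext ω
      rw [Set.mem_setOf_eq, hW ω, Nat.sInf_eq_zero]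
      constructor
      · rintro (h | h)
        · exact Or.inl h
        · right
          intro t ht
          have : (t : ℕ) ∈ {t : ℕ | X t ω = 1} := ht
          rw [h] at this
          exact this
      · rintro (h | h)
        · exact Or.inl h
        · right
          ext t
          simp only [Set.mem_setOf_eq, Set.mem_empty_iff_false, iff_false]
          exact h t
    have hle : μ {ω | W ω = 0} ≤ μ {ω | X 0 ω = 1} := by
      rw [hset]
      calc μ ({ω | X 0 ω = 1} ∪ N) ≤ μ {ω | X 0 ω = 1} + μ N := measure_union_le _ _
        _ = μ {ω | X 0 ω = 1} := by rw [hNz, add_zero]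
    have hge : μ {ω | X 0 ω = 1} ≤ μ {ω | W ω = 0} := by
      rw [hset]; exact measure_mono Set.subset_union_left
    rw [le_antisymm hle hge, hinit.2]
  | (m+1) =>
    rw [if_neg (Nat.succ_ne_zero m)]
    have hset : {ω | W ω = m+1}
        = {ω | X (m+1) ω = (1:Fin 2) ∧ ∀ i ≤ m, X i ω = 0} := by
      ext ω
      rw [Set.mem_setOf_eq, hW ω]
      constructor
      · intro hs
        have hne : {t : ℕ | X t ω = 1}.Nonempty := by
          by_contra h
          rw [Set.not_nonempty_iff_eq_empty] at h
          rw [h, Nat.sInf_empty] at hs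
          omega
        have h1 : X (m+1) ω = 1 := hs ▸ Nat.sInf_mem hne
        refine ⟨h1, fun i hi => ?_⟩
        have : i ∉ {t : ℕ | X t ω = 1} := Nat.notMem_of_lt_sInf (by omega)
        exact fin2_eq_zero _ this
      · rintro ⟨h1, h2⟩
        have hmem : (m+1) ∈ {t : ℕ | X t ω = 1} := h1
        have hne : {t : ℕ | X t ω = 1}.Nonempty := ⟨m+1, hmem⟩
        have hinfmem := Nat.sInf_mem hne
        apply le_antisymm (Nat.sInf_le hmem)
        by_contra h
        push_neg at h
        have hle : sInf {t : ℕ | X t ω = 1} ≤ m := by omega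
        have := h2 _ hle
        rw [Set.mem_setOf_eq] at hinfmem
        rw [this] at hinfmem
        exact absurd hinfmem (by decide)
    rw [hset]
    have := hchain m (fun _ => 0) 1
    simp only at this
    rw [this, hcyl m, hP01]
    ring
end

section
/- Let $X$ be an irreducible ergodic finite Markov chain with stationary distribution $\pi$, and define the average hitting time $\overline{w} = \sum_{j \in S}\pi_j \mathbb{E}[W_j]$, where $W_j$ is the hitting time of $j$ from stationarity. Let $t^* = \sup_{l \in S}\mathbb{E}[T_{(l)}]$, where $T_{(l)}$ is a fastest strong stationary time started at $l$, with $\mathbb{E}[T_{(l)}] = \sum_{t \ge 0}(1 - \inf_i P^t(l,i)/\pi_i)$. Then $\overline{w} \le (|S| - 1) t^*$. -/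
/-!
Write `s_l(t) = 1 - min_i P^t(l,i)/π_i`, so that `P^t(l,·) ≥ (1 - s_l(t)) π` and
`E[T_(l)] = ∑_t s_l(t)`. Decomposing `π P^t` at the first visit to `j` gives the renewal identity
`π_j ℙ(W_j > t) = ∑_{s ≤ t} ℙ(W_j = s) (P^(t-s)(j,j) - π_j)`, and stationarity together with the
lower bound on the rows `l ≠ j` gives `P^t(j,j) - π_j ≤ ∑_{l ≠ j} π_l s_l(t)`. Separation is
submultiplicative and drops below `1` once `P^t > 0`, so it decays geometrically; summing the
renewal identity as a Cauchy product then yields `π_j E[W_j] ≤ ∑_{l ≠ j} π_l E[T_(l)]`. Summing over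
`j` counts every `l` exactly `|S| - 1` times.
-/

open MeasureTheory Finset

open Matrix

theorem summable_pow_div {c : ℝ} (hc0 : 0 ≤ c) (hc1 : c < 1) (k : ℕ) [NeZero k] :
    Summable fun n : ℕ => c ^ (n / k) := by
  refine (Nat.divModEquiv k).symm.summable_iff.mp ?_
  have hprod : Summable fun p : ℕ × Fin k => c ^ p.1 * 1 :=
    (summable_geometric_of_lt_one hc0 hc1).mul_of_nonneg .of_finite
      (fun n => pow_nonneg hc0 n) fun _ => zero_le_one
  convert hprod using 2 with p
  rw [mul_one, ← congrArg Prod.fst ((Nat.divModEquiv k).apply_symm_apply p)]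
  rfl

theorem summable_and_tsum_le_of_le_convolution {f d a : ℕ → ℝ} (hf0 : 0 ≤ f) (hf : Summable f)
    (hf1 : ∑' n, f n ≤ 1) (hd0 : 0 ≤ d) (hd : Summable d) (ha0 : 0 ≤ a)
    (ha : ∀ n, a n ≤ ∑ k ∈ range (n + 1), f k * d (n - k)) :
    Summable a ∧ ∑' n, a n ≤ ∑' n, d n := by
  have hfd := hf.mul_of_nonneg hd hf0 hd0
  have hconv := summable_sum_mul_range_of_summable_mul hfd
  have ha' : Summable a := .of_nonneg_of_le ha0 ha hconv
  refine ⟨ha', ?_⟩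
  calc ∑' n, a n ≤ ∑' n, ∑ k ∈ range (n + 1), f k * d (n - k) := ha'.tsum_le_tsum ha hconv
    _ = (∑' n, f n) * ∑' n, d n := (hf.tsum_mul_tsum_eq_tsum_sum_range hd hfd).symm
    _ ≤ ∑' n, d n := mul_le_of_le_one_left (tsum_nonneg hd0) hf1

theorem Finset.sum_sum_erase_eq {S R : Type*} [Fintype S] [DecidableEq S] [CommRing R]
    (f : S → R) : ∑ j, ∑ l ∈ univ.erase j, f l = (Fintype.card S - 1) * ∑ l, f l := by
  simp only [sum_erase_eq_sub (mem_univ _), sum_sub_distrib, sum_const, card_univ, nsmul_eq_mul]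
  ring

theorem Finset.sum_mul_le_ciSup {S : Type*} [Fintype S] [Nonempty S] {w f : S → ℝ}
    (hw : ∀ i, 0 ≤ w i) (hw1 : ∑ i, w i = 1) : ∑ i, w i * f i ≤ ⨆ i, f i :=
  calc ∑ i, w i * f i ≤ ∑ i, w i * ⨆ i, f i := sum_le_sum fun i _ =>
        mul_le_mul_of_nonneg_left (le_ciSup (Finite.bddAbove_range f) i) (hw i)
    _ = ⨆ i, f i := by rw [← sum_mul, hw1, one_mul]

theorem Function.update_zero_add_single {ι M : Type*} [DecidableEq ι] [AddZeroClass M]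
    (v : ι → M) (j : ι) : Function.update v j 0 + Pi.single j (v j) = v := by
  ext k
  by_cases hk : k = j
  · subst hk; simp
  · simp [hk]

theorem Matrix.update_zero_dotProduct {ι R : Type*} [Fintype ι] [DecidableEq ι]
    [NonUnitalNonAssocSemiring R] (v w : ι → R) (j : ι) :
    Function.update v j 0 ⬝ᵥ w = v ⬝ᵥ Function.update w j 0 := by
  simp only [dotProduct, Function.update_apply]
  exact sum_congr rfl fun k _ => by split_ifs <;> simp

namespace Matrix

variable {S : Type*} [Fintype S] [DecidableEq S] {P : Matrix S S ℝ}

theorem sum_vecMul_of_mem_rowStochastic (hP : P ∈ rowStochastic ℝ S) (x : S → ℝ) :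
    ∑ k, (x ᵥ* P) k = ∑ k, x k := by
  simp only [vecMul, dotProduct]
  rw [sum_comm]
  simp [← mul_sum, sum_row_of_mem_rowStochastic hP]

theorem vecMul_pow_of_vecMul_eq_s17 {π : S → ℝ} (hπ : π ᵥ* P = π) (t : ℕ) : π ᵥ* P ^ t = π := by
  induction t with
  | zero => simp
  | succ t ih => rw [pow_succ, ← vecMul_vecMul, ih, hπ]

end Matrix

namespace MarkovHitting

section Separation

variable {S : Type*} [Fintype S] [DecidableEq S] {P : Matrix S S ℝ} {π : S → ℝ}

noncomputable def separation (P : Matrix S S ℝ) (π : S → ℝ) (l : S) (t : ℕ) : ℝ :=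
  1 - ⨅ i, (P ^ t) l i / π i

noncomputable def maxSeparation (P : Matrix S S ℝ) (π : S → ℝ) (t : ℕ) : ℝ :=
  ⨆ l, separation P π l t

theorem separation_le_maxSeparation (l : S) (t : ℕ) :
    separation P π l t ≤ maxSeparation P π t :=
  le_ciSup (f := fun l => separation P π l t) (Finite.bddAbove_range _) l

variable [Nonempty S]

theorem separation_le_iff (hπ : ∀ i, 0 < π i) {l : S} {t : ℕ} {s : ℝ} :
    separation P π l t ≤ s ↔ ∀ i, (1 - s) * π i ≤ (P ^ t) l i := by
  rw [separation, sub_le_comm, le_ciInf_iff (Finite.bddBelow_range _)]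
  exact forall_congr' fun i => le_div_iff₀ (hπ i)

theorem one_sub_separation_mul_le (hπ : ∀ i, 0 < π i) (l i : S) (t : ℕ) :
    (1 - separation P π l t) * π i ≤ (P ^ t) l i :=
  (separation_le_iff hπ).mp le_rfl i

theorem separation_nonneg (hP : P ∈ rowStochastic ℝ S) (hπ : ∀ i, 0 < π i)
    (hπ1 : ∑ i, π i = 1) (l : S) (t : ℕ) : 0 ≤ separation P π l t := by
  have h := sum_le_sum fun i (_ : i ∈ univ) => one_sub_separation_mul_le (P := P) hπ l i t
  rw [← mul_sum, hπ1, sum_row_of_mem_rowStochastic (pow_mem hP t)] at h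
  linarith

theorem separation_le_one (hP : P ∈ rowStochastic ℝ S) (hπ : ∀ i, 0 < π i) (l : S) (t : ℕ) :
    separation P π l t ≤ 1 :=
  (separation_le_iff hπ).mpr fun i => by
    simpa using nonneg_of_mem_rowStochastic (pow_mem hP t)

theorem separation_lt_one (hπ : ∀ i, 0 < π i) {l : S} {t : ℕ}
    (hpos : ∀ i, 0 < (P ^ t) l i) : separation P π l t < 1 := by
  obtain ⟨i, hi⟩ := exists_eq_ciInf_of_finite (f := fun i => (P ^ t) l i / π i)
  have := div_pos (hpos i) (hπ i)
  rw [separation, ← hi]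
  linarith

/-- The part `(1 - s) π` of `P ^ t l` is already stationary and stays so; the excess, of mass `s`,
is spread over rows of `P ^ u`, each of which dominates `(1 - b) π`. -/
theorem separation_add_le (hP : P ∈ rowStochastic ℝ S) (hπ : ∀ i, 0 < π i)
    (hπ1 : ∑ i, π i = 1) (hπP : π ᵥ* P = π) (l : S) (t u : ℕ) :
    separation P π l (t + u) ≤ separation P π l t * maxSeparation P π u := by
  set s := separation P π l t
  set b := maxSeparation P π u
  refine (separation_le_iff hπ).mpr fun i => ?_
  have hstat : ∑ k, π k * (P ^ u) k i = π i := congrFun (vecMul_pow_of_vecMul_eq_s17 hπP u) i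
  have hexcess : ∑ k, ((P ^ t) l k - (1 - s) * π k) = s := by
    rw [sum_sub_distrib, sum_row_of_mem_rowStochastic (pow_mem hP t), ← mul_sum, hπ1]
    ring
  calc (1 - s * b) * π i
      = (1 - s) * ∑ k, π k * (P ^ u) k i
        + ∑ k, ((P ^ t) l k - (1 - s) * π k) * ((1 - b) * π i) := by
        rw [hstat, ← sum_mul, hexcess]; ring
    _ ≤ (1 - s) * ∑ k, π k * (P ^ u) k i
        + ∑ k, ((P ^ t) l k - (1 - s) * π k) * (P ^ u) k i := by
        gcongr with k
        · linarith [one_sub_separation_mul_le (P := P) hπ l k t]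
        · exact (separation_le_iff hπ).mp (separation_le_maxSeparation k u) i
    _ = (P ^ (t + u)) l i := by
        rw [pow_add, mul_apply, mul_sum, ← sum_add_distrib]
        exact sum_congr rfl fun k _ => by ring

theorem maxSeparation_nonneg (hP : P ∈ rowStochastic ℝ S) (hπ : ∀ i, 0 < π i)
    (hπ1 : ∑ i, π i = 1) (t : ℕ) : 0 ≤ maxSeparation P π t :=
  (separation_nonneg hP hπ hπ1 (Classical.arbitrary S) t).trans
    (separation_le_maxSeparation _ t)

theorem maxSeparation_le_one (hP : P ∈ rowStochastic ℝ S) (hπ : ∀ i, 0 < π i) (t : ℕ) :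
    maxSeparation P π t ≤ 1 :=
  ciSup_le fun l => separation_le_one hP hπ l t

theorem maxSeparation_add_le (hP : P ∈ rowStochastic ℝ S) (hπ : ∀ i, 0 < π i)
    (hπ1 : ∑ i, π i = 1) (hπP : π ᵥ* P = π) (t u : ℕ) :
    maxSeparation P π (t + u) ≤ maxSeparation P π t * maxSeparation P π u :=
  ciSup_le fun l => (separation_add_le hP hπ hπ1 hπP l t u).trans <|
    mul_le_mul_of_nonneg_right (separation_le_maxSeparation l t)
      (maxSeparation_nonneg hP hπ hπ1 u)

theorem maxSeparation_le_pow_div (hP : P ∈ rowStochastic ℝ S) (hπ : ∀ i, 0 < π i)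
    (hπ1 : ∑ i, π i = 1) (hπP : π ᵥ* P = π) (k t : ℕ) :
    maxSeparation P π t ≤ maxSeparation P π k ^ (t / k) := by
  have hmul : ∀ n, maxSeparation P π (k * n) ≤ maxSeparation P π k ^ n := by
    intro n
    induction n with
    | zero => simpa using maxSeparation_le_one hP hπ 0
    | succ n ih =>
      rw [mul_add_one, pow_succ]
      exact (maxSeparation_add_le hP hπ hπ1 hπP _ _).trans <|
        mul_le_mul_of_nonneg_right ih (maxSeparation_nonneg hP hπ hπ1 k)
  calc maxSeparation P π t = maxSeparation P π (k * (t / k) + t % k) := by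
        rw [Nat.div_add_mod]
    _ ≤ maxSeparation P π (k * (t / k)) * maxSeparation P π (t % k) :=
        maxSeparation_add_le hP hπ hπ1 hπP _ _
    _ ≤ maxSeparation P π k ^ (t / k) * 1 :=
        mul_le_mul (hmul _) (maxSeparation_le_one hP hπ _)
          (maxSeparation_nonneg hP hπ hπ1 _) (pow_nonneg (maxSeparation_nonneg hP hπ hπ1 k) _)
    _ = _ := mul_one _

theorem summable_maxSeparation (hP : P ∈ rowStochastic ℝ S) (hπ : ∀ i, 0 < π i)
    (hπ1 : ∑ i, π i = 1) (hπP : π ᵥ* P = π) (hprim : ∃ t, ∀ i k, 0 < (P ^ t) i k) :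
    Summable (maxSeparation P π) := by
  obtain ⟨t, ht⟩ := hprim
  have hlt : maxSeparation P π t < 1 := by
    obtain ⟨l, hl⟩ := exists_eq_ciSup_of_finite (f := fun l => separation P π l t)
    rw [maxSeparation, ← hl]
    exact separation_lt_one hπ (ht l)
  -- `t` may be `0`, which is useless as a period; `t + 1` does at least as well.
  have hlt' : maxSeparation P π (t + 1) < 1 :=
    ((maxSeparation_add_le hP hπ hπ1 hπP t 1).trans <| mul_le_of_le_one_right
      (maxSeparation_nonneg hP hπ hπ1 t) (maxSeparation_le_one hP hπ 1)).trans_lt hlt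
  exact .of_nonneg_of_le (maxSeparation_nonneg hP hπ hπ1)
    (maxSeparation_le_pow_div hP hπ hπ1 hπP (t + 1))
    (summable_pow_div (maxSeparation_nonneg hP hπ hπ1 _) hlt' (t + 1))

theorem summable_separation (hP : P ∈ rowStochastic ℝ S) (hπ : ∀ i, 0 < π i)
    (hπ1 : ∑ i, π i = 1) (hπP : π ᵥ* P = π) (hprim : ∃ t, ∀ i k, 0 < (P ^ t) i k) (l : S) :
    Summable (separation P π l) :=
  .of_nonneg_of_le (separation_nonneg hP hπ hπ1 l) (separation_le_maxSeparation l)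
    (summable_maxSeparation hP hπ hπ1 hπP hprim)

end Separation

section Taboo

variable {S : Type*} [Fintype S] [DecidableEq S] {P : Matrix S S ℝ} {π : S → ℝ}

/-- `taboo P π j t k` is the probability, from `π`, of being at `k` at time `t` without having
visited `j` at any time `≤ t`. -/
noncomputable def taboo (P : Matrix S S ℝ) (π : S → ℝ) (j : S) : ℕ → S → ℝ
  | 0 => Function.update π j 0
  | t + 1 => Function.update (taboo P π j t ᵥ* P) j 0

/-- `firstHit P π j t` is the probability, from `π`, that the first visit to `j` is at time `t`. -/
noncomputable def firstHit (P : Matrix S S ℝ) (π : S → ℝ) (j : S) : ℕ → ℝ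
  | 0 => π j
  | t + 1 => (taboo P π j t ᵥ* P) j

theorem taboo_apply_self (j : S) (t : ℕ) : taboo P π j t j = 0 := by
  cases t <;> simp [taboo]

theorem taboo_nonneg (hP : P ∈ rowStochastic ℝ S) (hπ : ∀ i, 0 ≤ π i) (j : S) :
    ∀ t k, 0 ≤ taboo P π j t k
  | 0, k => by
    by_cases hk : k = j
    · simp [taboo, hk]
    · simpa [taboo, hk] using hπ k
  | t + 1, k => by
    by_cases hk : k = j
    · simp [taboo, hk]
    · simpa [taboo, hk] using nonneg_vecMul_of_mem_rowStochastic hP (taboo_nonneg hP hπ j t) k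

theorem firstHit_nonneg (hP : P ∈ rowStochastic ℝ S) (hπ : ∀ i, 0 ≤ π i) (j : S) :
    ∀ t, 0 ≤ firstHit P π j t
  | 0 => hπ j
  | t + 1 => nonneg_vecMul_of_mem_rowStochastic hP (taboo_nonneg hP hπ j t) j

theorem vecMul_pow_eq_taboo_add (j : S) (t : ℕ) :
    π ᵥ* P ^ t = taboo P π j t + ∑ s ∈ range (t + 1), firstHit P π j s • (P ^ (t - s)) j := by
  have hrow : ∀ x : ℝ, x • (1 : Matrix S S ℝ) j = Pi.single j x := fun x => by
    ext k; simp [Matrix.one_eq_pi_single, Pi.single_apply]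
  induction t with
  | zero =>
    simp only [pow_zero, vecMul_one, zero_add, range_one, sum_singleton, Nat.sub_self, hrow,
      taboo, firstHit]
    exact (Function.update_zero_add_single π j).symm
  | succ t ih =>
    have hsucc : ∀ s ∈ range (t + 1), (P ^ (t - s)) j ᵥ* P = (P ^ (t + 1 - s)) j := by
      intro s hs
      rw [← mul_apply_eq_vecMul, ← pow_succ, Nat.sub_add_comm (mem_range_succ_iff.mp hs)]
    rw [pow_succ, ← vecMul_vecMul, ih, add_vecMul, sum_vecMul, sum_range_succ _ (t + 1),
      Nat.sub_self, pow_zero, hrow, ← Function.update_zero_add_single (taboo P π j t ᵥ* P) j]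
    simp only [smul_vecMul, sum_congr rfl fun s hs => congrArg _ (hsucc s hs)]
    simp only [taboo, firstHit]
    abel

theorem sum_taboo_add_sum_firstHit (hP : P ∈ rowStochastic ℝ S) (hπ1 : ∑ i, π i = 1)
    (j : S) (t : ℕ) :
    ∑ k, taboo P π j t k + ∑ s ∈ range (t + 1), firstHit P π j s = 1 := by
  have h := congrArg (fun v => ∑ k, v k) (vecMul_pow_eq_taboo_add (P := P) (π := π) j t)
  simp only [sum_vecMul_of_mem_rowStochastic (pow_mem hP _), hπ1, Pi.add_apply, sum_add_distrib,
    Finset.sum_apply, Pi.smul_apply, smul_eq_mul] at h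
  rw [sum_comm] at h
  simpa [← mul_sum, sum_row_of_mem_rowStochastic (pow_mem hP _)] using h.symm

theorem sum_firstHit_mul_pow_apply_self (hπP : π ᵥ* P = π) (j : S) (t : ℕ) :
    ∑ s ∈ range (t + 1), firstHit P π j s * (P ^ (t - s)) j j = π j := by
  have h := congrFun (vecMul_pow_eq_taboo_add (P := P) (π := π) j t) j
  simpa [vecMul_pow_of_vecMul_eq_s17 hπP, taboo_apply_self] using h.symm

theorem mul_sum_taboo_eq_sum_firstHit_mul (hP : P ∈ rowStochastic ℝ S) (hπ1 : ∑ i, π i = 1)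
    (hπP : π ᵥ* P = π) (j : S) (t : ℕ) :
    π j * ∑ k, taboo P π j t k
      = ∑ s ∈ range (t + 1), firstHit P π j s * ((P ^ (t - s)) j j - π j) := by
  have h1 := sum_taboo_add_sum_firstHit hP hπ1 j t
  have h2 := sum_firstHit_mul_pow_apply_self hπP j t
  simp only [mul_sub, sum_sub_distrib, ← sum_mul]
  linear_combination π j * h1 - h2

variable [Nonempty S]

theorem pow_apply_self_sub_le (hπ : ∀ i, 0 < π i) (hπ1 : ∑ i, π i = 1) (hπP : π ᵥ* P = π)
    (j : S) (t : ℕ) :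
    (P ^ t) j j - π j ≤ ∑ l ∈ univ.erase j, π l * separation P π l t := by
  have hstat : ∑ l, π l * (P ^ t) l j = π j := congrFun (vecMul_pow_of_vecMul_eq_s17 hπP t) j
  rw [← add_sum_erase _ _ (mem_univ j)] at hstat
  have hlow : ∑ l ∈ univ.erase j, π l * ((1 - separation P π l t) * π j)
      ≤ ∑ l ∈ univ.erase j, π l * (P ^ t) l j :=
    sum_le_sum fun l _ =>
      mul_le_mul_of_nonneg_left (one_sub_separation_mul_le hπ l j t) (hπ l).le
  have hrest : ∑ l ∈ univ.erase j, π l = 1 - π j := by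
    rw [sum_erase_eq_sub (mem_univ j), hπ1]
  have hexpand : ∑ l ∈ univ.erase j, π l * ((1 - separation P π l t) * π j)
      = π j * (1 - π j) - π j * ∑ l ∈ univ.erase j, π l * separation P π l t := by
    rw [← hrest, mul_sum, mul_sum, ← sum_sub_distrib]
    exact sum_congr rfl fun _ _ => by ring
  refine le_of_mul_le_mul_left ?_ (hπ j)
  linarith

theorem summable_sum_taboo_and_mul_tsum_le (hP : P ∈ rowStochastic ℝ S) (hπ : ∀ i, 0 < π i)
    (hπ1 : ∑ i, π i = 1) (hπP : π ᵥ* P = π) (hprim : ∃ t, ∀ i k, 0 < (P ^ t) i k) (j : S) :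
    Summable (fun t => ∑ k, taboo P π j t k) ∧
      π j * ∑' t, ∑ k, taboo P π j t k ≤ ∑ l ∈ univ.erase j, π l * ∑' t, separation P π l t := by
  have hπ0 : ∀ i, 0 ≤ π i := fun i => (hπ i).le
  have hsep := summable_separation hP hπ hπ1 hπP hprim
  have hpartial : ∀ n, ∑ s ∈ range n, firstHit P π j s ≤ 1 := fun n => by
    have := sum_taboo_add_sum_firstHit hP hπ1 j n
    rw [sum_range_succ] at this
    linarith [sum_nonneg fun k (_ : k ∈ univ) => taboo_nonneg hP hπ0 j n k,
      firstHit_nonneg hP hπ0 j n]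
  have hfirst := summable_of_sum_range_le (firstHit_nonneg hP hπ0 j) hpartial
  obtain ⟨hsum, hle⟩ := summable_and_tsum_le_of_le_convolution
    (a := fun t => π j * ∑ k, taboo P π j t k)
    (d := fun t => ∑ l ∈ univ.erase j, π l * separation P π l t)
    (firstHit_nonneg hP hπ0 j) hfirst (hfirst.tsum_le_of_sum_range_le hpartial)
    (fun t => sum_nonneg fun l _ => mul_nonneg (hπ0 l) (separation_nonneg hP hπ hπ1 l t))
    (summable_sum fun l _ => (hsep l).mul_left _)
    (fun t => mul_nonneg (hπ0 j) (sum_nonneg fun k _ => taboo_nonneg hP hπ0 j t k))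
    (fun t => (mul_sum_taboo_eq_sum_firstHit_mul hP hπ1 hπP j t).trans_le <|
      sum_le_sum fun s _ => mul_le_mul_of_nonneg_left (pow_apply_self_sub_le hπ hπ1 hπP j _)
        (firstHit_nonneg hP hπ0 j s))
  refine ⟨(summable_mul_left_iff (hπ j).ne').mp hsum, ?_⟩
  rw [← tsum_mul_left]
  refine hle.trans_eq ?_
  rw [Summable.tsum_finsetSum fun l _ => (hsep l).mul_left _]
  exact sum_congr rfl fun l _ => tsum_mul_left

end Taboo

section Cylinder

variable {S Ω : Type*} {X : ℕ → Ω → S}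

def cylinder (X : ℕ → Ω → S) (t : ℕ) (g : Fin (t + 1) → S) : Set Ω :=
  {ω | ∀ i : Fin (t + 1), X i ω = g i}

theorem cylinder_eq (t : ℕ) (g : Fin (t + 1) → S) :
    cylinder X t g = {ω | ∀ i ≤ t, X i ω = g (Fin.clamp i t)} := by
  ext ω
  refine ⟨fun h i hi => ?_, fun h i => ?_⟩
  · simpa [Fin.clamp, min_eq_left hi] using h (Fin.clamp i t)
  · simpa [Fin.clamp, min_eq_left (Nat.lt_succ_iff.mp i.2)] using h i (Nat.lt_succ_iff.mp i.2)

theorem cylinder_snoc (t : ℕ) (g : Fin (t + 1) → S) (y : S) :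
    cylinder X (t + 1) (Fin.snoc g y) = {ω | X (t + 1) ω = y} ∩ cylinder X t g := by
  ext ω
  simp [cylinder, Fin.forall_fin_succ', and_comm]

variable [MeasurableSpace Ω] {μ : Measure Ω} {P : Matrix S S ℝ} {π : S → ℝ}

theorem measure_cylinder_zero (hinit : ∀ s, (μ {ω | X 0 ω = s}).toReal = π s)
    (g : Fin 1 → S) : (μ (cylinder X 0 g)).toReal = π (g 0) := by
  rw [← hinit]
  congr 2
  ext ω
  simp [cylinder, Fin.forall_fin_one]

theorem measure_cylinder_snoc (hX : IsMarkovChain μ X fun a b => P a b) (t : ℕ)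
    (g : Fin (t + 1) → S) (y : S) :
    (μ (cylinder X (t + 1) (Fin.snoc g y))).toReal
      = P (g (Fin.last t)) y * (μ (cylinder X t g)).toReal := by
  have h := hX t (fun i => g (Fin.clamp i t)) y
  rw [show Fin.clamp t t = Fin.last t from Fin.ext (min_self t)] at h
  rw [cylinder_snoc, cylinder_eq]
  exact h

variable [Fintype S] [DecidableEq S]

theorem sum_measure_cylinder_mul_eq_taboo_dotProduct (hX : IsMarkovChain μ X fun a b => P a b)
    (hinit : ∀ s, (μ {ω | X 0 ω = s}).toReal = π s) (j : S) (t : ℕ) (w : S → ℝ) :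
    ∑ g : Fin (t + 1) → S with ∀ i, g i ≠ j, (μ (cylinder X t g)).toReal * w (g (Fin.last t))
      = taboo P π j t ⬝ᵥ w := by
  induction t generalizing w with
  | zero =>
    rw [taboo, update_zero_dotProduct, sum_filter,
      ← (Equiv.funUnique (Fin 1) S).symm.sum_comp]
    simp [measure_cylinder_zero hinit, dotProduct, Function.update_apply]
  | succ t ih =>
    calc ∑ g : Fin (t + 2) → S with ∀ i, g i ≠ j,
          (μ (cylinder X (t + 1) g)).toReal * w (g (Fin.last (t + 1)))
        = ∑ g : Fin (t + 1) → S with ∀ i, g i ≠ j,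
            (μ (cylinder X t g)).toReal * (P *ᵥ Function.update w j 0) (g (Fin.last t)) := by
          rw [sum_filter, sum_filter, ← (Fin.snocEquiv fun _ => S).sum_comp,
            Fintype.sum_prod_type, sum_comm]
          refine sum_congr rfl fun g _ => ?_
          have hsplit : ∀ y, (∀ i, (Fin.snoc g y : Fin (t + 2) → S) i ≠ j) ↔
              (∀ i, g i ≠ j) ∧ y ≠ j := fun y => by
            rw [Fin.forall_fin_succ']
            simp only [Fin.snoc_castSucc, Fin.snoc_last]
          simp only [Fin.snocEquiv_apply, hsplit]
          by_cases hg : ∀ i, g i ≠ j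
          · simp only [and_iff_right hg, if_pos hg, mulVec, dotProduct, mul_sum,
              Function.update_apply]
            refine sum_congr rfl fun y _ => ?_
            rw [show (Fin.snocEquiv fun _ => S) (y, g) = Fin.snoc g y from rfl,
              measure_cylinder_snoc hX, Fin.snoc_last]
            by_cases hy : y = j
            · simp [hy]
            · simp only [hy, ne_eq, not_false_eq_true, if_true, if_false]
              ring
          · simp [hg]
      _ = taboo P π j (t + 1) ⬝ᵥ w := by
          rw [ih, dotProduct_mulVec, taboo, update_zero_dotProduct]

theorem measure_lt_hitTime_le [IsFiniteMeasure μ] (hX : IsMarkovChain μ X fun a b => P a b)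
    (hinit : ∀ s, (μ {ω | X 0 ω = s}).toReal = π s) {j : S} {W : Ω → ℕ}
    (hW : ∀ ω, W ω = sInf {t | X t ω = j}) (t : ℕ) :
    (μ {ω | t < W ω}).toReal ≤ ∑ k, taboo P π j t k := by
  have hsub : {ω | t < W ω} ⊆ ⋃ g ∈ ({g | ∀ i, g i ≠ j} : Finset (Fin (t + 1) → S)),
      cylinder X t g := by
    intro ω hω
    refine Set.mem_biUnion (x := fun i : Fin (t + 1) => X i ω)
      (mem_filter.mpr ⟨mem_univ _, fun i hi => ?_⟩) fun i => rfl
    have := hW ω ▸ Nat.sInf_le hi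
    exact absurd hω (not_lt.mpr (this.trans (Nat.lt_succ_iff.mp i.2)))
  calc (μ {ω | t < W ω}).toReal ≤ ∑ g : Fin (t + 1) → S with ∀ i, g i ≠ j,
        (μ (cylinder X t g)).toReal :=
        (measureReal_mono hsub (measure_ne_top _ _)).trans (measureReal_biUnion_finset_le _ _)
    _ = taboo P π j t ⬝ᵥ 1 := by
        simpa using sum_measure_cylinder_mul_eq_taboo_dotProduct hX hinit j t 1
    _ = ∑ k, taboo P π j t k := by simp [dotProduct]

end Cylinder

end MarkovHitting

open MarkovHitting

theorem average_hitting_bound_general {S : Type*} [Fintype S] [DecidableEq S] [Nonempty S]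
    {Ω : Type*} [MeasurableSpace Ω] (μ : Measure Ω) [IsProbabilityMeasure μ]
    (X : ℕ → Ω → S)
    (P : Matrix S S ℝ) (π : S → ℝ)
    (hP0 : ∀ i k, 0 ≤ P i k) (hP1 : ∀ i, ∑ k, P i k = 1)
    (herg : ∃ t, ∀ i k, 0 < (P ^ t) i k)
    (hπpos : ∀ s, 0 < π s) (hπsum : ∑ s, π s = 1)
    (hstat : Matrix.vecMul π P = π)
    (hchain : IsMarkovChain μ (fun t => X t) (fun a b => P a b))
    (hinit : ∀ s, (μ {ω | X 0 ω = s}).toReal = π s)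
    (W : S → Ω → ℕ) (hW : ∀ j ω, W j ω = sInf {t : ℕ | X t ω = j}) :
    ∑ j : S, π j * ∑' t : ℕ, (μ {ω | t < W j ω}).toReal
      ≤ (Fintype.card S - 1 : ℝ)
        * ⨆ l : S, ∑' t : ℕ, (1 - ⨅ i : S, (P ^ t) l i / π i) := by
  have hP : P ∈ rowStochastic ℝ S := mem_rowStochastic_iff_sum.mpr ⟨hP0, hP1⟩
  set T : S → ℝ := fun l => ∑' t, separation P π l t
  have hj : ∀ j, π j * ∑' t, (μ {ω | t < W j ω}).toReal ≤ ∑ l ∈ univ.erase j, π l * T l := by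
    intro j
    obtain ⟨hsum, hle⟩ := summable_sum_taboo_and_mul_tsum_le hP hπpos hπsum hstat herg j
    have hmono := measure_lt_hitTime_le hchain hinit (hW j)
    refine le_trans (mul_le_mul_of_nonneg_left ?_ (hπpos j).le) hle
    exact Summable.tsum_le_tsum hmono
      (.of_nonneg_of_le (fun _ => ENNReal.toReal_nonneg) hmono hsum) hsum
  calc ∑ j, π j * ∑' t, (μ {ω | t < W j ω}).toReal
      ≤ ∑ j, ∑ l ∈ univ.erase j, π l * T l := sum_le_sum fun j _ => hj j
    _ = (Fintype.card S - 1) * ∑ l, π l * T l := sum_sum_erase_eq _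
    _ ≤ (Fintype.card S - 1) * ⨆ l, T l :=
        mul_le_mul_of_nonneg_left (sum_mul_le_ciSup (fun l => (hπpos l).le) hπsum)
          (sub_nonneg.mpr (by exact_mod_cast Fintype.card_pos))

/-- the average hitting time `w̄ = ∑_j π_j E[W_j]` satisfies
`w̄ ≤ (|S| - 1) t*`, where `t* = sup_l E[T_{(l)}]` is the worst-case expected fastest
strong stationary time, `E[T_{(l)}] = ∑_{t≥0} (1 - inf_i P^t(l,i)/π_i)`. -/
theorem average_hitting_bound {S : Type*} [Fintype S] [DecidableEq S] [Nonempty S]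
    {Ω : Type*} [MeasurableSpace Ω] (μ : Measure Ω) [IsProbabilityMeasure μ]
    (X : ℕ → Ω → S)
    (P : Matrix S S ℝ) (π : S → ℝ)
    (hP0 : ∀ i k, 0 ≤ P i k) (hP1 : ∀ i, ∑ k, P i k = 1)
    (hirr : ∀ i k, ∃ t, 0 < (P ^ t) i k)
    (herg : ∃ t, ∀ i k, 0 < (P ^ t) i k)
    (hπpos : ∀ s, 0 < π s) (hπsum : ∑ s, π s = 1)
    (hstat : Matrix.vecMul π P = π)
    (hchain : IsMarkovChain μ (fun t => X t) (fun a b => P a b))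
    (hinit : ∀ s, (μ {ω | X 0 ω = s}).toReal = π s)
    (W : S → Ω → ℕ) (hW : ∀ j ω, W j ω = sInf {t : ℕ | X t ω = j}) :
    ∑ j : S, π j * ∑' t : ℕ, (μ {ω | t < W j ω}).toReal
      ≤ (Fintype.card S - 1 : ℝ)
        * ⨆ l : S, ∑' t : ℕ, (1 - ⨅ i : S, (P ^ t) l i / π i) :=
  average_hitting_bound_general μ X P π hP0 hP1 herg hπpos hπsum hstat hchain hinit W hW
end

section
/- Let $X$ be a reversible irreducible ergodic Markov chain on finite $S$ with transition matrix $P$ and stationary distribution $\pi$, and let $m \in S$ satisfy $\pi_m \ge \pi_l$ for all $l \in S$. For each $l$ let $T_{(l)}$ have tail $\mathbb{P}(T_{(l)} > t) = 1 - \inf_{k \in S} P^t(l,k)/\pi_k$ (the fastest strong stationary time from $l$). If for each $t \ge 1$ the minimum entry of the matrix $P^t$ occurs in the column corresponding to state $m$ (i.e. $\inf_k P^t(k,m) \le \inf_k P^t(k,l)$ for all $l$), then $T_{(m)} \ge_{st} T_{(l)}$ for every $l \in S$, i.e. $\mathbb{P}(T_{(m)} > t) \ge \mathbb{P}(T_{(l)}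 > t)$ for all $t$. -/
open MeasureTheory Finset

/-- for a reversible chain, if `π_m` is maximal and the minimum entry of
`P^t` lies in column `m` for each `t ≥ 1`, then the fastest strong stationary time from
`m` (tail `1 - inf_k P^t(m,k)/π_k`) stochastically dominates the one from any `l`. -/
theorem worst_case_sst {S : Type*} [Fintype S] [DecidableEq S] [Nonempty S]
    (P : Matrix S S ℝ) (π : S → ℝ) (m : S)
    (hP0 : ∀ i k, 0 ≤ P i k) (hP1 : ∀ i, ∑ k, P i k = 1)
    (hirr : ∀ i k, ∃ t, 0 < (P ^ t) i k)
    (herg : ∃ t, ∀ i k, 0 < (P ^ t) i k)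
    (hπpos : ∀ s, 0 < π s) (hπsum : ∑ s, π s = 1)
    (hstat : Matrix.vecMul π P = π)
    (hrev : ∀ k l, π k * P k l = π l * P l k)
    (hmax : ∀ l, π l ≤ π m)
    (hcol : ∀ t : ℕ, 1 ≤ t → ∀ l : S,
      (⨅ k : S, (P ^ t) k m) ≤ ⨅ k : S, (P ^ t) k l) :
    ∀ (l : S) (t : ℕ),
      1 - ⨅ k : S, (P ^ t) l k / π k ≤ 1 - ⨅ k : S, (P ^ t) m k / π k := by
  -- entries of powers are nonnegative
  have hpow0 : ∀ t (i k : S), 0 ≤ (P ^ t) i k := by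
    intro t
    induction t with
    | zero => intro i k; simp [Matrix.one_apply]; split <;> norm_num
    | succ t ih =>
        intro i k
        rw [pow_succ, Matrix.mul_apply]
        exact Finset.sum_nonneg fun j _ => mul_nonneg (ih i j) (hP0 j k)
  -- reversibility for powers
  have hrevt : ∀ t (k l : S), π k * (P ^ t) k l = π l * (P ^ t) l k := by
    intro t
    induction t with
    | zero => intro k l; by_cases h : k = l <;> simp [Matrix.one_apply, h, eq_comm]
    | succ t ih =>
        intro k l
        rw [pow_succ, Matrix.mul_apply, Finset.mul_sum]
        have : ∀ j, π k * ((P ^ t) k j * P j l) = π l * (P l j * (P ^ t) j k) := by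
          intro j
          have h1 : π k * (P ^ t) k j = π j * (P ^ t) j k := ih k j
          have h2 : π j * P j l = π l * P l j := hrev j l
          calc π k * ((P ^ t) k j * P j l)
              = (π k * (P ^ t) k j) * P j l := by ring
            _ = (π j * (P ^ t) j k) * P j l := by rw [h1]
            _ = (π j * P j l) * (P ^ t) j k := by ring
            _ = (π l * P l j) * (P ^ t) j k := by rw [h2]
            _ = π l * (P l j * (P ^ t) j k) := by ring
        simp_rw [this]
        rw [← Finset.mul_sum, ← Matrix.mul_apply, ← pow_succ', pow_succ]
  -- factor the infimum
  have hfac : ∀ t (i : S), (⨅ k : S, (P ^ t) i k / π k) = (⨅ k : S, (P ^ t) k i) / π i := by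
    intro t i
    have : ∀ k : S, (P ^ t) i k / π k = (P ^ t) k i / π i := by
      intro k
      have h := hrevt t i k
      rw [div_eq_div_iff (hπpos k).ne' (hπpos i).ne']
      linarith [h]
    rw [iInf_congr this]
    simp_rw [div_eq_mul_inv]
    rw [← Real.iInf_mul_of_nonneg (inv_nonneg.mpr (hπpos i).le)]
  intro l t
  have key : (⨅ k : S, (P ^ t) m k / π k) ≤ ⨅ k : S, (P ^ t) l k / π k := by
    rcases Nat.eq_zero_or_pos t with ht | ht
    · subst ht
      by_cases hlm : l = m
      · subst hlm; exact le_refl _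
      · -- both infima are 0
        have hz : ∀ i j : S, i ≠ j → ((P ^ 0) i j / π j : ℝ) = 0 := by
          intro i j hij
          simp [Matrix.one_apply, hij]
        have hbdd : ∀ i : S, BddBelow (Set.range fun k => (P ^ 0) i k / π k) :=
          fun i => Finite.bddBelow_range _
        have hle : ∀ i j : S, i ≠ j → (⨅ k : S, (P ^ 0) i k / π k) ≤ 0 := by
          intro i j hij
          calc (⨅ k : S, (P ^ 0) i k / π k) ≤ (P ^ 0) i j / π j := ciInf_le (hbdd i) j
            _ = 0 := hz i j hij
        have hge : ∀ i : S, 0 ≤ ⨅ k : S, (P ^ 0) i k / π k := by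
          intro i
          exact le_ciInf fun k => div_nonneg (hpow0 0 i k) (hπpos k).le
        have h1 : (⨅ k : S, (P ^ 0) m k / π k) = 0 :=
          le_antisymm (hle m l (Ne.symm hlm)) (hge m)
        have h2 : (⨅ k : S, (P ^ 0) l k / π k) = 0 :=
          le_antisymm (hle l m hlm) (hge l)
        rw [h1, h2]
    · rw [hfac t m, hfac t l]
      have hnn : 0 ≤ ⨅ k : S, (P ^ t) k m :=
        le_ciInf fun k => hpow0 t k m
      exact div_le_div₀ (hnn.trans (hcol t ht l)) (hcol t ht l) (hπpos l) (hmax l)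
  linarith [key]
end
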